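/- arXiv:0905.0488 — 5 statements merged into one kernel-verified Lean document; each statement's English description precedes it below -/
import Mathlib

section
/- Let K be a field, (R, 𝔪) a parameter K-algebra, and M a flat and 𝔪-adically complete R-module. Set M₀ := M/𝔪M, regarded as a K-module, and let σ : M₀ → M be any K-linear map such that the composite of σ with the canonical surjection M → M₀ is the identity of M₀. Then the induced R-linear map from the 𝔪-adic completion of R ⊗_K M₀ to M — namely the limit over i of the maps (R/𝔪^{i+1}) ⊗_K M₀ → M/𝔪^{i+1}M induced by r ⊗ x ↦ r·σ(x), followed by the inverse of the canonical bijection M → lim_i M/𝔪^{i+1}M — is bijective. -/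
/-!
Modulo `𝔪` the map `f` is the identity of `M₀`, so the completed map is surjective. For
injectivity one shows `f⁻¹(𝔪ⁿM) = 𝔪ⁿ(R ⊗_K M₀)` by induction on `n`: if `∑ rᵢ σ(bᵢ) ∈ 𝔪ⁿ⁺¹M`
with all `rᵢ ∈ 𝔪ⁿ`, flatness of `M` makes the relation trivial (equational criterion), and
pairing it with the coordinate functionals of a `K`-basis `(bᵢ)` of `M₀` (which are `R`-linear into
`R/𝔪` because `K → R/𝔪` is onto) shows `rᵢ ∈ 𝔪ⁿ⁺¹`. Completeness of `M` identifies `g` with the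
completed map.
-/

open IsLocalRing TensorProduct

section Residue

variable {K R M : Type*} [CommRing K] [CommRing R] [Algebra K R] {I : Ideal R}
  [AddCommGroup M] [Module R M] [Module K M] [IsScalarTower K R M]

theorem smul_eq_smul_of_algebraMap_eq {r : R} {k : K}
    (h : algebraMap K (R ⧸ I) k = Ideal.Quotient.mk I r) (x : M ⧸ (I • ⊤ : Submodule R M)) :
    r • x = k • x := by
  obtain ⟨m, rfl⟩ := Submodule.Quotient.mk_surjective _ x
  rw [← algebraMap_smul R k, ← Submodule.Quotient.mk_smul, ← Submodule.Quotient.mk_smul,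
    Submodule.Quotient.eq, ← sub_smul]
  refine Submodule.smul_mem_smul ?_ Submodule.mem_top
  rw [← Ideal.Quotient.eq, Ideal.Quotient.mk_algebraMap, h]

def residueFunctional (hK : Function.Surjective (algebraMap K (R ⧸ I)))
    (φ : (M ⧸ (I • ⊤ : Submodule R M)) →ₗ[K] K) : M →ₗ[R] R ⧸ I where
  toFun m := algebraMap K (R ⧸ I) (φ ((I • ⊤ : Submodule R M).mkQ m))
  map_add' := by simp
  map_smul' r m := by
    obtain ⟨k, hk⟩ := hK (Ideal.Quotient.mk I r)
    rw [map_smul, smul_eq_smul_of_algebraMap_eq hk, map_smul, smul_eq_mul, map_mul, hk]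
    rfl

end Residue

namespace Module.Flat

variable {R M : Type*} [CommRing R] [AddCommGroup M] [Module R M] [Module.Flat R M]
  {I J : Ideal R} (ψ : M →ₗ[R] R ⧸ I)

theorem sum_mul_mem_mul_of_sum_smul_eq_zero {ι : Type*} [Fintype ι] {r c : ι → R} {x : ι → M}
    (hrel : ∑ i, r i • x i = 0) (hr : ∀ i, r i ∈ J)
    (hc : ∀ i, Ideal.Quotient.mk I (c i) = ψ (x i)) : ∑ i, r i * c i ∈ J * I := by
  obtain ⟨k, a, y, hxy, hra⟩ := isTrivialRelation_of_sum_smul_eq_zero hrel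
  choose d hd using fun j => Ideal.Quotient.mk_surjective (ψ (y j))
  have hcd : ∀ i, c i - ∑ j, a i j * d j ∈ I := fun i => by
    rw [← Ideal.Quotient.eq_zero_iff_mem, map_sub, hc, hxy, map_sum, map_sum]
    simp [hd, Algebra.smul_def]
  have hsplit : ∑ i, r i * c i
      = ∑ i, r i * (c i - ∑ j, a i j * d j) + ∑ j, (∑ i, r i * a i j) * d j := by
    simp only [mul_sub, Finset.sum_sub_distrib, Finset.mul_sum, Finset.sum_mul, mul_assoc]
    rw [Finset.sum_comm (f := fun j i => r i * (a i j * d j))]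
    ring
  rw [hsplit]
  simp only [hra, zero_mul, Finset.sum_const_zero, add_zero]
  exact Ideal.sum_mem _ fun i _ => Ideal.mul_mem_mul (hr i) (hcd i)

theorem sum_mul_mem_mul_of_sum_smul_mem {ι : Type*} {s : Finset ι} {r c : ι → R} {x : ι → M}
    (hx : ∑ i ∈ s, r i • x i ∈ (J * I) • (⊤ : Submodule R M)) (hr : ∀ i ∈ s, r i ∈ J)
    (hc : ∀ i ∈ s, Ideal.Quotient.mk I (c i) = ψ (x i)) : ∑ i ∈ s, r i * c i ∈ J * I := by
  rw [← Submodule.span_univ, ← Set.range_id] at hx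
  obtain ⟨a, ha, hsum⟩ := (Submodule.mem_ideal_smul_span_iff_exists_sum _ id _).mp hx
  choose d hd using fun m => Ideal.Quotient.mk_surjective (ψ m)
  -- the relation `∑ rᵢ xᵢ - ∑ aₘ m = 0`, indexed by `s ⊕ a.support`
  have key := sum_mul_mem_mul_of_sum_smul_eq_zero ψ (J := J) (ι := s ⊕ a.support)
    (r := Sum.elim (fun i => r i) fun m => -a m) (c := Sum.elim (fun i => c i) fun m => d m)
    (x := Sum.elim (fun i => x i) fun m => m) ?rel ?coeff ?lift
  case rel =>
    simp only [Fintype.sum_sum_type, Sum.elim_inl, Sum.elim_inr, neg_smul,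
      Finset.sum_neg_distrib, Finset.sum_coe_sort (f := fun i => r i • x i),
      Finset.sum_coe_sort (f := fun m => a m • m)]
    rw [← hsum]
    exact add_neg_cancel _
  case coeff =>
    rintro (i | m)
    · exact hr i i.2
    · exact neg_mem (Ideal.mul_le_left (ha m))
  case lift =>
    rintro (i | m)
    · exact hc i i.2
    · exact hd m
  simp only [Fintype.sum_sum_type, Sum.elim_inl, Sum.elim_inr, neg_mul,
    Finset.sum_neg_distrib, Finset.sum_coe_sort (f := fun i => r i * c i),
    Finset.sum_coe_sort (f := fun m => a m * d m)] at key
  simpa using add_mem key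
    (Ideal.sum_mem (t := a.support) _ fun m _ => Ideal.mul_mem_right (d m) _ (ha m))

end Module.Flat

theorem AdicCompletion.map_injective_of_comap_pow_smul_top_le {R N M : Type*} [CommRing R]
    {I : Ideal R} [AddCommGroup N] [Module R N] [AddCommGroup M] [Module R M] {f : N →ₗ[R] M}
    (h : ∀ n : ℕ, (I ^ n • ⊤ : Submodule R M).comap f ≤ I ^ n • ⊤) :
    Function.Injective (map I f) := by
  refine (injective_iff_map_eq_zero _).mpr fun y hy => AdicCompletion.ext fun n => ?_
  obtain ⟨x, hx⟩ := Submodule.Quotient.mk_surjective _ (y.val n)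
  have hfx : f x ∈ (I ^ n • ⊤ : Submodule R M) := by
    rw [← Submodule.Quotient.mk_eq_zero, ← LinearMap.reduceModIdeal_apply, hx, ← map_val_apply, hy]
    rfl
  simpa [← hx, Submodule.Quotient.mk_eq_zero] using h n hfx

section Coefficients

variable {R M : Type*} [CommRing R] {I : Ideal R} [AddCommGroup M] [Module R M] [Module.Flat R M]

theorem coeff_mem_pow_of_sum_smul_mem {K : Type*} [CommRing K] [Algebra K R] [Module K M]
    [IsScalarTower K R M] (hK : Function.Surjective (algebraMap K (R ⧸ I)))
    {σ : (M ⧸ (I • ⊤ : Submodule R M)) →ₗ[K] M} (hσ : ∀ x, (I • ⊤ : Submodule R M).mkQ (σ x) = x)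
    {ι : Type*} (b : Module.Basis ι K (M ⧸ (I • ⊤ : Submodule R M))) {s : Finset ι} {r : ι → R}
    {n : ℕ} (h : ∑ i ∈ s, r i • σ (b i) ∈ (I ^ n • ⊤ : Submodule R M)) :
    ∀ i ∈ s, r i ∈ I ^ n := by
  classical
  induction n with
  | zero => simp
  | succ n ih =>
    have hr := ih (Submodule.smul_mono_left (Ideal.pow_le_pow_right n.le_succ) h)
    intro i₀ hi₀
    have key := Module.Flat.sum_mul_mem_mul_of_sum_smul_mem (residueFunctional hK (b.coord i₀))
      (c := fun i => if i = i₀ then 1 else 0) (by rwa [← pow_succ]) hr fun i _ => by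
        simp only [residueFunctional, LinearMap.coe_mk, AddHom.coe_mk, hσ,
          Module.Basis.coord_apply, Module.Basis.repr_self, Finsupp.single_apply]
        split_ifs <;> simp_all
    simpa [← pow_succ, hi₀] using key

theorem mem_pow_smul_top_of_map_mem {K : Type*} [Field K] [Algebra K R] [Module K M]
    [IsScalarTower K R M] (hK : Function.Surjective (algebraMap K (R ⧸ I)))
    {σ : (M ⧸ (I • ⊤ : Submodule R M)) →ₗ[K] M} (hσ : ∀ x, (I • ⊤ : Submodule R M).mkQ (σ x) = x)
    (f : R ⊗[K] (M ⧸ (I • ⊤ : Submodule R M)) →ₗ[R] M) (hf : ∀ r x, f (r ⊗ₜ[K] x) = r • σ x)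
    {n : ℕ} {w : R ⊗[K] (M ⧸ (I • ⊤ : Submodule R M))}
    (hw : f w ∈ (I ^ n • ⊤ : Submodule R M)) : w ∈ (I ^ n • ⊤ : Submodule R _) := by
  classical
  let b := Module.Basis.ofVectorSpace K (M ⧸ (I • ⊤ : Submodule R M))
  let bN := b.baseChange R
  have hw_eq : w = ∑ i ∈ (bN.repr w).support, bN.repr w i • bN i :=
    (bN.linearCombination_repr w).symm
  have hfw : f w = ∑ i ∈ (bN.repr w).support, bN.repr w i • σ (b i) := by
    conv_lhs => rw [hw_eq]
    simp [bN, hf]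
  rw [hfw] at hw
  rw [hw_eq]
  exact Submodule.sum_mem _ fun i hi =>
    Submodule.smul_mem_smul (coeff_mem_pow_of_sum_smul_mem hK hσ b hw i hi) Submodule.mem_top

end Coefficients

theorem statement1_general
    (K : Type) [Field K]
    (R : Type) [CommRing R] [Algebra K R] [IsLocalRing R]
    (hres : Function.Bijective (algebraMap K (R ⧸ maximalIdeal R)))
    (M : Type) [AddCommGroup M] [Module R M] [Module K M] [IsScalarTower K R M]
    (hflat : Module.Flat R M) (hMcomplete : IsAdicComplete (maximalIdeal R) M)
    (σ : (M ⧸ (maximalIdeal R • ⊤ : Submodule R M)) →ₗ[K] M)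
    (hσ : ∀ x, (maximalIdeal R • ⊤ : Submodule R M).mkQ (σ x) = x) :
    ∀ f : (R ⊗[K] (M ⧸ (maximalIdeal R • ⊤ : Submodule R M))) →ₗ[R] M,
      (∀ (r : R) (x : M ⧸ (maximalIdeal R • ⊤ : Submodule R M)),
        f (r ⊗ₜ[K] x) = r • σ x) →
      ∀ g : AdicCompletion (maximalIdeal R)
          (R ⊗[K] (M ⧸ (maximalIdeal R • ⊤ : Submodule R M))) →ₗ[R] M,
        (∀ y, AdicCompletion.of (maximalIdeal R) M (g y)
            = AdicCompletion.map (maximalIdeal R) f y) →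
        Function.Bijective g := by
  intro f hf g hg
  have hcomp : AdicCompletion.of (maximalIdeal R) M ∘ g = AdicCompletion.map (maximalIdeal R) f :=
    funext hg
  rw [← (AdicCompletion.of_bijective_iff.mpr hMcomplete).of_comp_iff', hcomp]
  refine ⟨AdicCompletion.map_injective_of_comap_pow_smul_top_le fun n w hw =>
      mem_pow_smul_top_of_map_mem hres.surjective hσ f hf hw,
    AdicCompletion.map_surjective_of_mkQ_comp_surjective fun x => ⟨1 ⊗ₜ x, ?_⟩⟩
  simp [hf, hσ]

/-- Let `(R, 𝔪)` be a parameter `K`-algebra and `M` a flat and `𝔪`-adically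
complete `R`-module.  Let `M₀ := M/𝔪M`, and let `σ : M₀ → M` be any `K`-linear splitting of the
canonical surjection `M → M₀`.  Then the induced `R`-linear map from the `𝔪`-adic completion of
`R ⊗_K M₀` to `M` is bijective. -/
theorem statement1
    (K : Type) [Field K]
    (R : Type) [CommRing R] [Algebra K R] [IsNoetherianRing R] [IsLocalRing R]
    (hcomplete : IsAdicComplete (maximalIdeal R) R)
    (hres : Function.Bijective (algebraMap K (R ⧸ maximalIdeal R)))
    (M : Type) [AddCommGroup M] [Module R M] [Module K M] [IsScalarTower K R M]
    (hflat : Module.Flat R M) (hMcomplete : IsAdicComplete (maximalIdeal R) M)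
    (σ : (M ⧸ (maximalIdeal R • ⊤ : Submodule R M)) →ₗ[K] M)
    (hσ : ∀ x, (maximalIdeal R • ⊤ : Submodule R M).mkQ (σ x) = x) :
    ∀ f : (R ⊗[K] (M ⧸ (maximalIdeal R • ⊤ : Submodule R M))) →ₗ[R] M,
      (∀ (r : R) (x : M ⧸ (maximalIdeal R • ⊤ : Submodule R M)),
        f (r ⊗ₜ[K] x) = r • σ x) →
      ∀ g : AdicCompletion (maximalIdeal R)
          (R ⊗[K] (M ⧸ (maximalIdeal R • ⊤ : Submodule R M))) →ₗ[R] M,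
        (∀ y, AdicCompletion.of (maximalIdeal R) M (g y)
            = AdicCompletion.map (maximalIdeal R) f y) →
        Function.Bijective g :=
  statement1_general K R hres M hflat hMcomplete σ hσ
end

section
/- Let A be an associative unital ring with a two-sided ideal 𝔞 that is nilpotent and such that the associated graded ring gr_𝔞 A is commutative. Then for every s ∈ A the multiplicative set S := {s^j : j ∈ ℕ} is a denominator set in A; that is: (left Ore condition) for all a ∈ A and n ∈ ℕ there exist b ∈ A and m ∈ ℕ with s^m·a = b·s^n; (right Ore condition) for all a ∈ A and n ∈ ℕ there exist b ∈ A and m ∈ ℕ with a·s^m = s^n·b; (left reversibility) if a·s^n = 0 then s^m·a = 0 for some m; (right reversibility) if s^n·a = 0 then a·s^m = 0 for some m. Consequently the Ore ring of fractions A_s = A S^{-1} exists. -/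
/-!
Write `L` and `R` for left and right multiplication by `s`. They commute, and `L - R` raises
the `𝔞`-adic filtration by one because `gr_𝔞 A` is commutative, so it is nilpotent since `𝔞` is.
For commuting `x, y` with `(x - y) ^ N = 0` the binomial theorem makes `y ^ (n + N)` divisible
by `x ^ n` on either side. Applied to `L, R` in both orders and evaluated at `a`, these
divisibilities are exactly the two Ore conditions and the two reversibility conditions.
-/

/-- The `n`-th power of a subset `I` of a ring, as an additive subgroup:
`I^0 = A`, and `I^{n+1}` is the additive subgroup generated by the products `a * b`
with `a ∈ I` and `b ∈ I^n`. -/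
def setPow {A : Type} [Ring A] (I : Set A) : ℕ → AddSubgroup A
  | 0 => ⊤
  | n + 1 => AddSubgroup.closure {x | ∃ a ∈ I, ∃ b ∈ setPow I n, x = a * b}

open LinearMap

theorem Commute.exists_pow_eq_mul_pow_of_sub_pow_eq_zero {R : Type*} [Ring R]
    {x y : R} {n m p : ℕ} (hp : n + m ≤ p + 1) (h_comm : Commute x y) (h : (x - y) ^ n = 0) :
    ∃ c, y ^ p = c * x ^ m := by
  have hop : (MulOpposite.op x - MulOpposite.op y) ^ n = 0 := by
    rw [← MulOpposite.op_sub, ← MulOpposite.op_pow, h, MulOpposite.op_zero]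
  obtain ⟨c, hc⟩ := h_comm.op.pow_dvd_pow_of_sub_pow_eq_zero hp hop
  exact ⟨c.unop, by simpa using congrArg MulOpposite.unop hc⟩

section setPow

variable {A : Type} [Ring A] (I : Set A) {f : Module.End ℤ A}

theorem pow_apply_mem_setPow (hf : ∀ k, ∀ x ∈ setPow I k, f x ∈ setPow I (k + 1)) (k : ℕ)
    (x : A) : (f ^ k) x ∈ setPow I k := by
  induction k with
  | zero => trivial
  | succ k ih => rw [pow_succ', Module.End.mul_apply]; exact hf k _ ih

theorem isNilpotent_mulLeft_sub_mulRight_of_setPow (hnil : ∃ N, setPow I N = ⊥) {s : A}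
    (hs : ∀ k, ∀ x ∈ setPow I k, s * x - x * s ∈ setPow I (k + 1)) :
    IsNilpotent (mulLeft ℤ s - mulRight ℤ s) :=
  let ⟨N, hN⟩ := hnil
  ⟨N, LinearMap.ext fun x => by simpa [hN] using pow_apply_mem_setPow I hs N x⟩

end setPow

section AdNilpotent

variable {A : Type} [Ring A] {s : A} (hs : IsNilpotent (mulLeft ℤ s - mulRight ℤ s))
include hs

theorem exists_pow_mul_eq_mul_pow (a : A) (n : ℕ) :
    ∃ (b : A) (m : ℕ), s ^ m * a = b * s ^ n := by
  obtain ⟨N, hN⟩ := hs.neg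
  rw [neg_sub] at hN
  obtain ⟨c, hc⟩ := (commute_mulLeft_right (R := ℤ) s s).symm
    |>.pow_dvd_pow_of_sub_pow_eq_zero (m := n) (p := n + N) (by omega) hN
  exact ⟨c a, n + N, by simpa using congr($hc a)⟩

theorem exists_mul_pow_eq_pow_mul (a : A) (n : ℕ) :
    ∃ (b : A) (m : ℕ), a * s ^ m = s ^ n * b := by
  obtain ⟨N, hN⟩ := hs
  obtain ⟨c, hc⟩ := (commute_mulLeft_right (R := ℤ) s s)
    |>.pow_dvd_pow_of_sub_pow_eq_zero (m := n) (p := n + N) (by omega) hN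
  exact ⟨c a, n + N, by simpa using congr($hc a)⟩

theorem exists_pow_mul_eq_zero_of_mul_pow_eq_zero {a : A} {n : ℕ} (ha : a * s ^ n = 0) :
    ∃ m : ℕ, s ^ m * a = 0 := by
  obtain ⟨N, hN⟩ := hs.neg
  rw [neg_sub] at hN
  obtain ⟨c, hc⟩ := (commute_mulLeft_right (R := ℤ) s s).symm
    |>.exists_pow_eq_mul_pow_of_sub_pow_eq_zero (m := n) (p := n + N) (by omega) hN
  exact ⟨n + N, by simpa [ha] using congr($hc a)⟩

theorem exists_mul_pow_eq_zero_of_pow_mul_eq_zero {a : A} {n : ℕ} (ha : s ^ n * a = 0) :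
    ∃ m : ℕ, a * s ^ m = 0 := by
  obtain ⟨N, hN⟩ := hs
  obtain ⟨c, hc⟩ := (commute_mulLeft_right (R := ℤ) s s)
    |>.exists_pow_eq_mul_pow_of_sub_pow_eq_zero (m := n) (p := n + N) (by omega) hN
  exact ⟨n + N, by simpa [ha] using congr($hc a)⟩

end AdNilpotent

/-- Let `A` be a ring with a nilpotent two-sided ideal `𝔞` such that the
associated graded ring `gr_𝔞 A` is commutative.  Then for every `s ∈ A` the set of powers of `s`
is a denominator set in `A`: the left and right Ore conditions and the left and right
reversibility conditions hold. -/
theorem statement3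
    (A : Type) [Ring A] (I : TwoSidedIdeal A)
    (hnil : ∃ N : ℕ, setPow (I : Set A) N = ⊥)
    (hcomm : ∀ (i j : ℕ) (x y : A), x ∈ setPow (I : Set A) i → y ∈ setPow (I : Set A) j →
      x * y - y * x ∈ setPow (I : Set A) (i + j + 1))
    (s : A) :
    (∀ (a : A) (n : ℕ), ∃ (b : A) (m : ℕ), s ^ m * a = b * s ^ n) ∧
    (∀ (a : A) (n : ℕ), ∃ (b : A) (m : ℕ), a * s ^ m = s ^ n * b) ∧
    (∀ (a : A) (n : ℕ), a * s ^ n = 0 → ∃ m : ℕ, s ^ m * a = 0) ∧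
    (∀ (a : A) (n : ℕ), s ^ n * a = 0 → ∃ m : ℕ, a * s ^ m = 0) := by
  have hs : IsNilpotent (mulLeft ℤ s - mulRight ℤ s) :=
    isNilpotent_mulLeft_sub_mulRight_of_setPow _ hnil fun k x hx => by
      simpa using hcomm 0 k s x trivial hx
  exact ⟨exists_pow_mul_eq_mul_pow hs, exists_mul_pow_eq_pow_mul hs,
    fun _ _ => exists_pow_mul_eq_zero_of_mul_pow_eq_zero hs,
    fun _ _ => exists_mul_pow_eq_zero_of_pow_mul_eq_zero hs⟩
end

section
/- Let A be an associative unital ring with a nilpotent two-sided ideal 𝔞 such that gr_𝔞 A is commutative, let s ∈ A, let A_s be the Ore ring of fractions of A at the denominator set {s^j : j ∈ ℕ}, with canonical ring homomorphism λ : A → A_s. Let Ā := A/𝔞 (a commutative ring), let s̄ ∈ Ā be the image of s, let Ā_{s̄} be the localization of Ā at the powers of s̄, and let φ : A_s → Ā_{s̄} be the unique ring homomorphism sending λ(a) to the image of a in Ā_{s̄} for every a ∈ A. Then φ is surjective, and its kernel 𝔞_s equals the left ideal of A_s generated by λ(𝔞), equals the right ideal of A_s generated by λ(𝔞), and is nilpotent: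 (𝔞_s)^k = 0 for some k. -/
section aux
variable {A : Type} [Ring A]

lemma setPow_mul_right (I : Set A) : ∀ n, ∀ x ∈ setPow I n, ∀ c, x * c ∈ setPow I n := by
  intro n
  induction n with
  | zero => intro x _ c; exact AddSubgroup.mem_top _
  | succ n ih =>
    intro x hx c
    have : setPow I (n+1) ≤ (setPow I (n+1)).comap (AddMonoidHom.mulRight c) := by
      rw [setPow]; rw [AddSubgroup.closure_le]
      rintro y ⟨a, ha, b, hb, rfl⟩
      show a * b * c ∈ setPow I (n+1)
      rw [mul_assoc]
      exact AddSubgroup.subset_closure ⟨a, ha, b * c, ih b hb c, rfl⟩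
    exact this hx

lemma setPow_mul_left (I : Set A) (hI : ∀ c, ∀ a ∈ I, c * a ∈ I) :
    ∀ n, ∀ x ∈ setPow I (n+1), ∀ c, c * x ∈ setPow I (n+1) := by
  intro n x hx c
  have : setPow I (n+1) ≤ (setPow I (n+1)).comap (AddMonoidHom.mulLeft c) := by
    rw [setPow, AddSubgroup.closure_le]
    rintro y ⟨a, ha, b, hb, rfl⟩
    show c * (a * b) ∈ setPow I (n+1)
    rw [← mul_assoc]
    exact AddSubgroup.subset_closure ⟨c * a, hI c a ha, b, hb, rfl⟩
  exact this hx

lemma setPow_succ_le (I : Set A) (hI : ∀ c, ∀ a ∈ I, c * a ∈ I) :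
    ∀ n, setPow I (n+1) ≤ setPow I n := by
  intro n
  match n with
  | 0 => exact le_top
  | n + 1 =>
    rw [show setPow I (n+2) = AddSubgroup.closure {x | ∃ a ∈ I, ∃ b ∈ setPow I (n+1), x = a * b} from rfl,
      AddSubgroup.closure_le]
    rintro y ⟨a, ha, b, hb, rfl⟩
    exact setPow_mul_left I hI n b hb a

lemma setPow_anti (I : Set A) (hI : ∀ c, ∀ a ∈ I, c * a ∈ I) :
    ∀ {n m}, n ≤ m → setPow I m ≤ setPow I n := by
  intro n m h
  induction m with
  | zero => rw [Nat.le_zero.mp h]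
  | succ m ih =>
    rcases Nat.lt_or_ge n (m+1) with h' | h'
    · exact le_trans (setPow_succ_le I hI m) (ih (Nat.lt_succ_iff.mp h'))
    · rw [Nat.le_antisymm h h']

end aux

/-- Let `A` be a ring with a nilpotent two-sided ideal `𝔞` such that `gr_𝔞 A` is
commutative, `s ∈ A`, let `A_s` (here `B`, with canonical map `l`) be the Ore ring of fractions
at the powers of `s`, let `Ā := A/𝔞` (here `Abar`, with quotient map `p`), and let `Ā_{s̄}`
(here `L`) be the localization of `Ā` at the powers of `s̄ = p s`.  Let `φ : A_s → Ā_{s̄}` be the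
unique ring homomorphism with `φ(λ a) = image of a`.  Then `φ` is surjective and its kernel `𝔞_s`
equals the left ideal of `A_s` generated by `λ(𝔞)`, equals the right ideal of `A_s` generated by
`λ(𝔞)`, and is nilpotent. -/
theorem statement4
    (A : Type) [Ring A] (I : TwoSidedIdeal A)
    (hnil : ∃ N : ℕ, setPow (I : Set A) N = ⊥)
    (hcomm : ∀ (i j : ℕ) (x y : A), x ∈ setPow (I : Set A) i → y ∈ setPow (I : Set A) j →
      x * y - y * x ∈ setPow (I : Set A) (i + j + 1))
    (s : A)
    -- `B`, together with `l`, is the Ore ring of fractions `A_s`: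
    (B : Type) [Ring B] (l : A →+* B)
    (hunit : IsUnit (l s))
    (hfrac : ∀ b : B, ∃ (a : A) (n : ℕ), b * l (s ^ n) = l a)
    (hlker : ∀ a : A, l a = 0 ↔ ∃ n : ℕ, a * s ^ n = 0)
    -- `Abar`, together with the surjection `p` with kernel `𝔞`, is `Ā := A/𝔞`:
    (Abar : Type) [CommRing Abar] (p : A →+* Abar)
    (hpsurj : Function.Surjective p)
    (hpker : ∀ a : A, p a = 0 ↔ a ∈ I)
    -- `L` is the localization `Ā_{s̄}` of `Ā` at the powers of `s̄ := p s`: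
    (L : Type) [CommRing L] [Algebra Abar L] [IsLocalization.Away (p s) L]
    -- `φ : B → L` is the unique ring homomorphism sending `l a` to the image of `p a`:
    (φ : B →+* L)
    (hφ : ∀ a : A, φ (l a) = algebraMap Abar L (p a)) :
    Function.Surjective φ ∧
    {b : B | φ b = 0} = (AddSubgroup.closure {x : B | ∃ b : B, ∃ a ∈ I, x = b * l a} : Set B) ∧
    {b : B | φ b = 0} = (AddSubgroup.closure {x : B | ∃ a ∈ I, ∃ b : B, x = l a * b} : Set B) ∧
    ∃ k : ℕ, setPow {b : B | φ b = 0} k = ⊥ := by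
  classical
  set SI : Set A := (I : Set A) with hSI
  have hIleft : ∀ c, ∀ a ∈ SI, c * a ∈ SI := fun c a ha => I.mul_mem_left c a ha
  obtain ⟨N₀, hN₀⟩ := hnil
  set N : ℕ := max N₀ 1 with hNdef
  have hN1 : 1 ≤ N := le_max_right _ _
  have hN : setPow SI N = ⊥ := by
    refine le_antisymm ?_ bot_le
    calc setPow SI N ≤ setPow SI N₀ := setPow_anti SI hIleft (le_max_left _ _)
    _ = ⊥ := hN₀
  set u : Bˣ := hunit.unit with hudef
  have hu : (u : B) = l s := hunit.unit_spec
  set v : B := ((u⁻¹ : Bˣ) : B) with hvdef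
  have huv : ∀ n : ℕ, (u : B) ^ n * v ^ n = 1 := by
    intro n
    rw [hvdef, ← Units.val_pow_eq_pow_val, ← Units.val_pow_eq_pow_val, ← Units.val_mul,
      inv_pow, mul_inv_cancel, Units.val_one]
  have hvu : ∀ n : ℕ, v ^ n * (u : B) ^ n = 1 := by
    intro n
    rw [hvdef, ← Units.val_pow_eq_pow_val, ← Units.val_pow_eq_pow_val, ← Units.val_mul,
      inv_pow, inv_mul_cancel, Units.val_one]
  have hlsn : ∀ n : ℕ, l (s ^ n) = (u : B) ^ n := by intro n; rw [map_pow, hu]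
  -- conjugation identity
  have hX : ∀ (n : ℕ) (X : B),
      X * v ^ n = v ^ n * X + v ^ n * (((u : B) ^ n * X - X * (u : B) ^ n) * v ^ n) := by
    intro n X
    have h1 : v ^ n * ((u : B) ^ n * X * v ^ n) = X * v ^ n := by
      rw [mul_assoc ((u:B)^n) X, ← mul_assoc (v^n), hvu, one_mul]
    have h2 : v ^ n * (X * (u : B) ^ n * v ^ n) = v ^ n * X := by
      rw [mul_assoc X, huv, mul_one]
    calc X * v ^ n = v ^ n * X + (v ^ n * ((u : B) ^ n * X * v ^ n)
          - v ^ n * (X * (u : B) ^ n * v ^ n)) := by rw [h1, h2]; abel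
    _ = v ^ n * X + v ^ n * (((u : B) ^ n * X - X * (u : B) ^ n) * v ^ n) := by
        rw [sub_mul, mul_sub]
  -- every element of B is l a * v ^ n
  have hfrac' : ∀ b : B, ∃ (a : A) (n : ℕ), b = l a * v ^ n := by
    intro b
    obtain ⟨a, n, h⟩ := hfrac b
    refine ⟨a, n, ?_⟩
    calc b = b * ((u : B) ^ n * v ^ n) := by rw [huv, mul_one]
    _ = (b * l (s ^ n)) * v ^ n := by rw [hlsn, mul_assoc]
    _ = l a * v ^ n := by rw [h]
  -- setPow SI 1 is SI
  have hpow1 : ∀ a : A, a ∈ setPow SI 1 ↔ a ∈ SI := by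
    let K : AddSubgroup A :=
      { carrier := SI
        add_mem' := fun hx hy => I.add_mem hx hy
        zero_mem' := I.zero_mem
        neg_mem' := fun hx => I.neg_mem hx }
    have hK : ∀ x : A, x ∈ K ↔ x ∈ SI := fun _ => Iff.rfl
    intro a
    constructor
    · intro ha
      have hle : setPow SI 1 ≤ K := by
        rw [show setPow SI 1
            = AddSubgroup.closure {x | ∃ a ∈ SI, ∃ b ∈ setPow SI 0, x = a * b} from rfl,
          AddSubgroup.closure_le]
        rintro x ⟨a, ha, b, _, rfl⟩
        exact (hK _).mpr (I.mul_mem_right a b ha)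
      exact (hK a).mp (hle ha)
    · intro ha
      exact AddSubgroup.subset_closure ⟨a, ha, 1, AddSubgroup.mem_top _, (mul_one a).symm⟩
  -- the filtered left ideals
  set T : ℕ → AddSubgroup B := fun i =>
    AddSubgroup.closure {x : B | ∃ b : B, ∃ a ∈ setPow SI i, x = b * l a} with hTdef
  have hTgen : ∀ (i : ℕ) (b : B), ∀ a ∈ setPow SI i, b * l a ∈ T i := by
    intro i b a ha
    exact AddSubgroup.subset_closure ⟨b, a, ha, rfl⟩
  have hTmono : ∀ {i j : ℕ}, i ≤ j → T j ≤ T i := by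
    intro i j hij
    rw [hTdef]
    apply AddSubgroup.closure_mono
    rintro x ⟨b, a, ha, rfl⟩
    exact ⟨b, a, setPow_anti SI hIleft hij ha, rfl⟩
  have hTleft : ∀ i (x : B), x ∈ T i → ∀ c, c * x ∈ T i := by
    intro i x hx c
    have hle : T i ≤ (T i).comap (AddMonoidHom.mulLeft c) := by
      rw [hTdef, AddSubgroup.closure_le]
      rintro y ⟨b, a, ha, rfl⟩
      show c * (b * l a) ∈ T i
      rw [← mul_assoc]
      exact hTgen i (c * b) a ha
    exact hle hx
  have hT0 : ∀ y : B, y ∈ T 0 := by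
    intro y
    have := hTgen 0 y 1 (AddSubgroup.mem_top _)
    simpa using this
  -- the key commutation lemma
  have hkey : ∀ (m i : ℕ), 1 ≤ i → N ≤ i + m → ∀ a ∈ setPow SI i, ∀ c : B, l a * c ∈ T i := by
    intro m
    induction m with
    | zero =>
      intro i _ hNi a ha c
      have h0 : a ∈ (⊥ : AddSubgroup A) := hN ▸ setPow_anti SI hIleft (by omega : N ≤ i) ha
      rw [AddSubgroup.mem_bot] at h0
      rw [h0, map_zero, zero_mul]
      exact (T i).zero_mem
    | succ m ih =>
      intro i hi hNi a ha c
      obtain ⟨b, n, rfl⟩ := hfrac' c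
      have he : a * b ∈ setPow SI i := setPow_mul_right SI i a ha b
      have hd : s ^ n * (a * b) - (a * b) * s ^ n ∈ setPow SI (i + 1) := by
        have h0 := hcomm i 0 (a * b) (s ^ n) he (AddSubgroup.mem_top _)
        have h2 := (setPow SI (i + 0 + 1)).neg_mem h0
        rw [neg_sub] at h2
        simpa using h2
      have heq : l a * (l b * v ^ n) = v ^ n * l (a * b)
          + v ^ n * (l (s ^ n * (a * b) - (a * b) * s ^ n) * v ^ n) := by
        have e1 : l (s ^ n * (a * b) - (a * b) * s ^ n)
            = (u : B) ^ n * l (a * b) - l (a * b) * (u : B) ^ n := by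
          rw [map_sub, map_mul l (s ^ n) (a * b), map_mul l (a * b) (s ^ n), hlsn]
        rw [e1, ← mul_assoc, ← map_mul l a b]
        exact hX n (l (a * b))
      rw [heq]
      refine (T i).add_mem (hTgen i (v ^ n) (a * b) he) ?_
      have h1 : l (s ^ n * (a * b) - (a * b) * s ^ n) * v ^ n ∈ T (i + 1) :=
        ih (i + 1) (by omega) (by omega) _ hd (v ^ n)
      exact hTmono (Nat.le_succ i) (hTleft (i + 1) _ h1 (v ^ n))
  -- elements of the kernel
  have hker_rep : ∀ b : B, φ b = 0 → ∃ a ∈ SI, ∃ n : ℕ, b = l a * v ^ n := by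
    intro b hb
    obtain ⟨a, n, hbn⟩ := hfrac b
    have h0 : algebraMap Abar L (p a) = 0 := by
      rw [← hφ, ← hbn, map_mul, hb, zero_mul]
    obtain ⟨m, hm0⟩ := (IsLocalization.map_eq_zero_iff (Submonoid.powers (p s)) L (p a)).mp h0
    obtain ⟨k, hk⟩ := m.2
    have hk' : (p s) ^ k = ↑m := hk
    have hmem : a * s ^ k ∈ SI := by
      apply (hpker _).mp
      rw [map_mul, map_pow, hk', mul_comm]
      exact hm0
    refine ⟨a * s ^ k, hmem, n + k, ?_⟩
    have hbl : b * (u : B) ^ (n + k) = l (a * s ^ k) := by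
      rw [pow_add, ← hlsn n, ← hlsn k, ← mul_assoc, hbn, ← map_mul]
    calc b = b * ((u : B) ^ (n + k) * v ^ (n + k)) := by rw [huv, mul_one]
    _ = l (a * s ^ k) * v ^ (n + k) := by rw [← mul_assoc, hbl]
  -- kernel elements vanish
  have hφl0 : ∀ a ∈ SI, φ (l a) = 0 := by
    intro a ha
    rw [hφ, (hpker a).mpr ha, map_zero]
  -- kernel is contained in T 1
  have hker_T1 : ∀ b : B, φ b = 0 → b ∈ T 1 := by
    intro b hb
    obtain ⟨a, ha, n, rfl⟩ := hker_rep b hb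
    exact hkey N 1 le_rfl (by omega) a ((hpow1 a).mpr ha) (v ^ n)
  -- T 1 ≤ closure of left generators
  have hT1_le : T 1 ≤ AddSubgroup.closure {x : B | ∃ b : B, ∃ a ∈ I, x = b * l a} := by
    rw [hTdef, AddSubgroup.closure_le]
    rintro x ⟨b, a, ha, rfl⟩
    exact AddSubgroup.subset_closure ⟨b, a, (hpow1 a).mp ha, rfl⟩
  -- closure of left generators ≤ kernel
  have hL_ker : AddSubgroup.closure {x : B | ∃ b : B, ∃ a ∈ I, x = b * l a}
      ≤ φ.toAddMonoidHom.ker := by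
    rw [AddSubgroup.closure_le]
    rintro x ⟨b, a, ha, rfl⟩
    show φ (b * l a) = 0
    rw [map_mul, hφl0 a ha, mul_zero]
  have hR_ker : AddSubgroup.closure {x : B | ∃ a ∈ I, ∃ b : B, x = l a * b}
      ≤ φ.toAddMonoidHom.ker := by
    rw [AddSubgroup.closure_le]
    rintro x ⟨a, ha, b, rfl⟩
    show φ (l a * b) = 0
    rw [map_mul, hφl0 a ha, zero_mul]
  -- right multiplication sends T 1 to T (k+1)
  have hTright : ∀ (k : ℕ) (x : B), x ∈ T 1 → ∀ a ∈ setPow SI k, x * l a ∈ T (k + 1) := by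
    intro k x hx a ha
    have hle : T 1 ≤ (T (k + 1)).comap (AddMonoidHom.mulRight (l a)) := by
      rw [hTdef, AddSubgroup.closure_le]
      rintro y ⟨b, a1, ha1, rfl⟩
      show b * l a1 * l a ∈ T (k + 1)
      rw [mul_assoc, ← map_mul]
      refine hTgen (k + 1) b (a1 * a) ?_
      exact AddSubgroup.subset_closure ⟨a1, (hpow1 a1).mp ha1, a, ha, rfl⟩
    exact hle hx
  -- l a * (T k) ⊆ T (k+1) for a ∈ SI
  have hLT : ∀ (k : ℕ), ∀ a ∈ SI, ∀ z ∈ T k, l a * z ∈ T (k + 1) := by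
    intro k a ha z hz
    have hle : T k ≤ (T (k + 1)).comap (AddMonoidHom.mulLeft (l a)) := by
      rw [hTdef, AddSubgroup.closure_le]
      rintro y ⟨b, a1, ha1, rfl⟩
      show l a * (b * l a1) ∈ T (k + 1)
      rw [← mul_assoc]
      refine hTright k (l a * b) ?_ a1 ha1
      exact hkey N 1 le_rfl (by omega) a ((hpow1 a).mpr ha) b
    exact hle hz
  -- kernel products
  have hmulTk : ∀ (k : ℕ) (x : B), φ x = 0 → ∀ y ∈ T k, x * y ∈ T (k + 1) := by
    intro k x hx y hy
    obtain ⟨a, ha, n, rfl⟩ := hker_rep x hx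
    rw [mul_assoc]
    exact hLT k a ha (v ^ n * y) (hTleft k y hy (v ^ n))
  -- induction: setPow of the kernel
  have hind : ∀ k : ℕ, setPow {b : B | φ b = 0} k ≤ T k := by
    intro k
    induction k with
    | zero => intro x _; exact hT0 x
    | succ k ih =>
      rw [show setPow {b : B | φ b = 0} (k + 1)
          = AddSubgroup.closure
            {x | ∃ a ∈ {b : B | φ b = 0}, ∃ b ∈ setPow {b : B | φ b = 0} k, x = a * b} from rfl,
        AddSubgroup.closure_le]
      rintro x ⟨a, ha, b, hb, rfl⟩
      exact hmulTk k a ha b (ih hb)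
  have hTN : T N = ⊥ := by
    refine le_antisymm ?_ bot_le
    rw [hTdef, AddSubgroup.closure_le]
    rintro x ⟨b, a, ha, rfl⟩
    have h0 : a = 0 := AddSubgroup.mem_bot.mp (hN ▸ ha)
    rw [h0, map_zero, mul_zero]
    exact (⊥ : AddSubgroup B).zero_mem
  -- surjectivity
  have hsurj : Function.Surjective φ := by
    intro z
    obtain ⟨⟨r, m⟩, hz⟩ := IsLocalization.surj (Submonoid.powers (p s)) z
    obtain ⟨n, hn⟩ := m.2
    have hn' : (p s) ^ n = ↑m := hn
    obtain ⟨a, rfl⟩ := hpsurj r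
    refine ⟨l a * v ^ n, ?_⟩
    have hψu : φ ((u : B) ^ n) = algebraMap Abar L ((p s) ^ n) := by
      rw [← hlsn, hφ, map_pow]
    have h1 : φ (l a * v ^ n) * φ ((u : B) ^ n) = φ (l a) := by
      rw [← map_mul, mul_assoc, hvu, mul_one]
    have h2 : z * φ ((u : B) ^ n) = φ (l a) := by
      rw [hψu, hn', hφ]
      exact hz
    have hcancel : ∀ w w' : L, w * φ ((u : B) ^ n) = w' * φ ((u : B) ^ n) → w = w' := by
      intro w w' h
      have h4 : φ ((u : B) ^ n) * φ (v ^ n) = 1 := by rw [← map_mul, huv n, map_one]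
      calc w = w * (φ ((u : B) ^ n) * φ (v ^ n)) := by rw [h4, mul_one]
      _ = (w * φ ((u : B) ^ n)) * φ (v ^ n) := by rw [mul_assoc]
      _ = (w' * φ ((u : B) ^ n)) * φ (v ^ n) := by rw [h]
      _ = w' * (φ ((u : B) ^ n) * φ (v ^ n)) := by rw [mul_assoc]
      _ = w' := by rw [h4, mul_one]
    exact hcancel _ _ (h1.trans h2.symm)
  refine ⟨hsurj, ?_, ?_, ⟨N, ?_⟩⟩
  · apply Set.Subset.antisymm
    · intro b hb
      exact hT1_le (hker_T1 b hb)
    · intro b hb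
      exact hL_ker hb
  · apply Set.Subset.antisymm
    · intro b hb
      obtain ⟨a, ha, n, rfl⟩ := hker_rep b hb
      exact AddSubgroup.subset_closure ⟨a, ha, v ^ n, rfl⟩
    · intro b hb
      exact hR_ker hb
  · refine le_antisymm (le_trans (hind N) (le_of_eq hTN)) bot_le
end

section
/- Let K be a field of characteristic 0, let R := K[[ℏ]] be the ring of formal power series with maximal ideal (ℏ), let C be a commutative K-algebra, and let (A, π) be an associative R-deformation of C. Then: (a) for all a₁, a₂ ∈ A the commutator a₁a₂ − a₂a₁ lies in ℏA, and since A is flat over R (hence has no ℏ-torsion) there is a unique element b(a₁,a₂) ∈ A with ℏ·b(a₁,a₂) = ½(a₁a₂ − a₂a₁); (b) there is a unique K-bilinear map {−,−}_A : C × C → C such that {π(a₁), π(a₂)}_A = π(b(a₁,a₂)) for all a₁, a₂ ∈ A; (c) {−,−}_A is a Poisson bracket on C: it is antisymmetric, satisfies the Jacobi identity, and is a K-linear derivation in each argument. -/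
open PowerSeries

/-- `br : C × C → C` is a K-bilinear map satisfying the defining property of the first order
bracket of an associative `K[[ℏ]]`-deformation `(A, π)` of `C`:
`br (π a₁) (π a₂) = π b` whenever `ℏ • b = ½ (a₁ a₂ - a₂ a₁)`. -/
def IsAssocFOBracket (K : Type) [Field K] (A C : Type) [Ring A] [CommRing C]
    [Algebra K C] [Module K A] [Module (PowerSeries K) A] (π : A → C)
    (br : C → C → C) : Prop :=
  (∀ c₁ c₂ c₃ : C, br (c₁ + c₂) c₃ = br c₁ c₃ + br c₂ c₃) ∧
  (∀ c₁ c₂ c₃ : C, br c₁ (c₂ + c₃) = br c₁ c₂ + br c₁ c₃) ∧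
  (∀ (k : K) (c₁ c₂ : C), br (k • c₁) c₂ = k • br c₁ c₂) ∧
  (∀ (k : K) (c₁ c₂ : C), br c₁ (k • c₂) = k • br c₁ c₂) ∧
  (∀ a₁ a₂ b : A,
    (PowerSeries.X : PowerSeries K) • b = (2 : K)⁻¹ • (a₁ * a₂ - a₂ * a₁) →
    br (π a₁) (π a₂) = π b)

/-- Let `K` be a field of characteristic 0, `R := K[[ℏ]]`, `C` a commutative
`K`-algebra and `(A, π)` an associative `R`-deformation of `C`.  Then (a) commutators lie in
`ℏA`, and each `½(a₁a₂ - a₂a₁)` can be divided by `ℏ` uniquely; (b) there is a unique `K`-bilinear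
map `{-,-}_A : C × C → C` with `{π a₁, π a₂}_A = π b` whenever `ℏ b = ½(a₁a₂ - a₂a₁)`;
(c) `{-,-}_A` is a Poisson bracket on `C`. -/
theorem statement10
    (K : Type) [Field K] [CharZero K]
    (C : Type) [CommRing C] [Algebra K C]
    (A : Type) [Ring A] [Algebra K A] [Algebra (PowerSeries K) A]
    [IsScalarTower K (PowerSeries K) A]
    (hflat : Module.Flat (PowerSeries K) A)
    (hcomplete : IsAdicComplete (Ideal.span {(PowerSeries.X : PowerSeries K)}) A)
    (π : A →ₐ[K] C)
    (hsurj : Function.Surjective π)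
    (hker : ∀ a : A, π a = 0 ↔
      a ∈ (Ideal.span {(PowerSeries.X : PowerSeries K)} • ⊤ : Submodule (PowerSeries K) A)) :
    -- (a)
    (∀ a₁ a₂ : A,
      (a₁ * a₂ - a₂ * a₁
        ∈ (Ideal.span {(PowerSeries.X : PowerSeries K)} • ⊤ : Submodule (PowerSeries K) A)) ∧
      (∃! b : A,
        (PowerSeries.X : PowerSeries K) • b = (2 : K)⁻¹ • (a₁ * a₂ - a₂ * a₁))) ∧
    -- (b) and (c)
    (∃ br : C → C → C,
      IsAssocFOBracket K A C π br ∧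
      (∀ br' : C → C → C, IsAssocFOBracket K A C π br' → br' = br) ∧
      (∀ c₁ c₂ : C, br c₁ c₂ = - br c₂ c₁) ∧
      (∀ c₁ c₂ c₃ : C, br c₁ (br c₂ c₃) + br c₂ (br c₃ c₁) + br c₃ (br c₁ c₂) = 0) ∧
      (∀ c₁ c₂ c₃ : C, br c₁ (c₂ * c₃) = br c₁ c₂ * c₃ + c₂ * br c₁ c₃) ∧
      (∀ c₁ c₂ c₃ : C, br (c₁ * c₂) c₃ = br c₁ c₃ * c₂ + c₁ * br c₂ c₃)) := by
  haveI := hflat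
  -- X acts regularly (injectively) on A, by flatness
  have hreg : IsSMulRegular A (X : PowerSeries K) := by
    have h0 : IsSMulRegular (PowerSeries K) (X : PowerSeries K) := by
      intro x y h
      simp only [smul_eq_mul] at h
      exact mul_left_cancel₀ PowerSeries.X_ne_zero h
    exact ((TensorProduct.lid (PowerSeries K) A).isSMulRegular_congr _).mp (h0.rTensor A)
  -- kernel elements are divisible by X
  have hkerX : ∀ a : A, π a = 0 → ∃ t : A, (X : PowerSeries K) • t = a := by
    intro a ha
    have h := (hker a).mp ha
    rw [Submodule.ideal_span_singleton_smul] at h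
    obtain ⟨t, -, ht⟩ := Set.mem_smul_set.mp h
    exact ⟨t, ht⟩
  -- commutators map to zero
  have hcommker : ∀ x y : A, π (x * y - y * x) = 0 := by
    intro x y
    rw [map_sub, map_mul, map_mul, mul_comm, sub_self]
  -- existence of halved commutator divided by X
  have hex : ∀ a₁ a₂ : A, ∃ b : A,
      (X : PowerSeries K) • b = (2 : K)⁻¹ • (a₁ * a₂ - a₂ * a₁) := by
    intro a₁ a₂
    obtain ⟨t, ht⟩ := hkerX _ (hcommker a₁ a₂)
    exact ⟨(2 : K)⁻¹ • t, by rw [smul_comm, ht]⟩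
  choose b2 hb2 using hex
  choose σ hσ using hsurj
  set br : C → C → C := fun c₁ c₂ => π (b2 (σ c₁) (σ c₂)) with hbr_def
  have hbrd : ∀ c₁ c₂ : C, br c₁ c₂ = π (b2 (σ c₁) (σ c₂)) := fun _ _ => rfl
  -- the key well-definedness property
  have key : ∀ a₁ a₂ b : A,
      (X : PowerSeries K) • b = (2 : K)⁻¹ • (a₁ * a₂ - a₂ * a₁) →
      br (π a₁) (π a₂) = π b := by
    intro a₁ a₂ b hb
    obtain ⟨t₁, ht₁⟩ := hkerX (σ (π a₁) - a₁) (by rw [map_sub, hσ, sub_self])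
    obtain ⟨t₂, ht₂⟩ := hkerX (σ (π a₂) - a₂) (by rw [map_sub, hσ, sub_self])
    have hdiff : (X : PowerSeries K) • (b2 (σ (π a₁)) (σ (π a₂)) - b)
        = (X : PowerSeries K) • ((2 : K)⁻¹ •
            (t₁ * σ (π a₂) - σ (π a₂) * t₁ + (a₁ * t₂ - t₂ * a₁))) := by
      rw [smul_sub, hb2, hb, smul_comm, ← smul_sub]
      congr 1
      rw [smul_add, smul_sub, smul_sub,
        ← smul_mul_assoc (X : PowerSeries K) t₁ (σ (π a₂)),
        ← mul_smul_comm (X : PowerSeries K) (σ (π a₂)) t₁,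
        ← mul_smul_comm (X : PowerSeries K) a₁ t₂,
        ← smul_mul_assoc (X : PowerSeries K) t₂ a₁, ht₁, ht₂]
      noncomm_ring
    have h4 := congrArg π (hreg hdiff)
    rw [map_sub, map_smul, map_add, hcommker, hcommker, add_zero, smul_zero] at h4
    rw [hbrd, sub_eq_zero.mp h4]
  constructor
  · -- part (a)
    intro a₁ a₂
    refine ⟨(hker _).mp (hcommker a₁ a₂), b2 a₁ a₂, hb2 a₁ a₂, fun y hy => ?_⟩
    exact hreg (hy.trans (hb2 a₁ a₂).symm)
  · -- parts (b), (c)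
    have addl : ∀ c₁ c₂ c₃ : C, br (c₁ + c₂) c₃ = br c₁ c₃ + br c₂ c₃ := by
      intro c₁ c₂ c₃
      have h1 := key (σ c₁ + σ c₂) (σ c₃) (b2 (σ c₁) (σ c₃) + b2 (σ c₂) (σ c₃)) (by
        rw [smul_add, hb2, hb2, ← smul_add]
        congr 1
        noncomm_ring)
      rw [map_add, hσ, hσ, hσ] at h1
      rw [h1, map_add, hbrd c₁ c₃, hbrd c₂ c₃]
    have addr : ∀ c₁ c₂ c₃ : C, br c₁ (c₂ + c₃) = br c₁ c₂ + br c₁ c₃ := by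
      intro c₁ c₂ c₃
      have h1 := key (σ c₁) (σ c₂ + σ c₃) (b2 (σ c₁) (σ c₂) + b2 (σ c₁) (σ c₃)) (by
        rw [smul_add, hb2, hb2, ← smul_add]
        congr 1
        noncomm_ring)
      rw [map_add, hσ, hσ, hσ] at h1
      rw [h1, map_add, hbrd c₁ c₂, hbrd c₁ c₃]
    have smull : ∀ (k : K) (c₁ c₂ : C), br (k • c₁) c₂ = k • br c₁ c₂ := by
      intro k c₁ c₂
      have h1 := key (k • σ c₁) (σ c₂) (k • b2 (σ c₁) (σ c₂)) (by
        rw [smul_comm, hb2, smul_comm k, smul_sub, ← smul_mul_assoc, ← mul_smul_comm])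
      rw [map_smul, hσ, hσ] at h1
      rw [h1, map_smul, hbrd c₁ c₂]
    have smulr : ∀ (k : K) (c₁ c₂ : C), br c₁ (k • c₂) = k • br c₁ c₂ := by
      intro k c₁ c₂
      have h1 := key (σ c₁) (k • σ c₂) (k • b2 (σ c₁) (σ c₂)) (by
        rw [smul_comm, hb2, smul_comm k, smul_sub, ← mul_smul_comm, ← smul_mul_assoc])
      rw [map_smul, hσ, hσ] at h1
      rw [h1, map_smul, hbrd c₁ c₂]
    refine ⟨br, ⟨addl, addr, smull, smulr, key⟩, ?_, ?_, ?_, ?_, ?_⟩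
    · -- uniqueness
      intro br' h'
      funext c₁ c₂
      calc br' c₁ c₂ = br' (π (σ c₁)) (π (σ c₂)) := by rw [hσ, hσ]
        _ = π (b2 (σ c₁) (σ c₂)) := h'.2.2.2.2 (σ c₁) (σ c₂) _ (hb2 _ _)
        _ = br c₁ c₂ := (hbrd c₁ c₂).symm
    · -- antisymmetry
      intro c₁ c₂
      have h1 := key (σ c₂) (σ c₁) (-(b2 (σ c₁) (σ c₂))) (by
        rw [smul_neg, hb2, ← smul_neg]
        congr 1
        noncomm_ring)
      rw [hσ, hσ, map_neg] at h1
      rw [hbrd c₁ c₂, h1, neg_neg]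
    · -- Jacobi
      intro c₁ c₂ c₃
      have hdd : ∀ x y z : A, (X : PowerSeries K) • ((X : PowerSeries K) • b2 x (b2 y z))
          = ((2 : K)⁻¹ * (2 : K)⁻¹) • (x * (y * z - z * y) - (y * z - z * y) * x) := by
        intro x y z
        rw [hb2, smul_comm, smul_sub, ← mul_smul_comm, ← smul_mul_assoc, hb2,
          mul_smul_comm, smul_mul_assoc, ← smul_sub, smul_smul]
      have hsum : b2 (σ c₁) (b2 (σ c₂) (σ c₃)) + b2 (σ c₂) (b2 (σ c₃) (σ c₁))
          + b2 (σ c₃) (b2 (σ c₁) (σ c₂)) = 0 := by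
        apply hreg; apply hreg
        simp only [smul_add, hdd, smul_zero]
        rw [← smul_add, ← smul_add]
        have hJ : σ c₁ * (σ c₂ * σ c₃ - σ c₃ * σ c₂) - (σ c₂ * σ c₃ - σ c₃ * σ c₂) * σ c₁
            + (σ c₂ * (σ c₃ * σ c₁ - σ c₁ * σ c₃) - (σ c₃ * σ c₁ - σ c₁ * σ c₃) * σ c₂)
            + (σ c₃ * (σ c₁ * σ c₂ - σ c₂ * σ c₁) - (σ c₁ * σ c₂ - σ c₂ * σ c₁) * σ c₃)
            = (0 : A) := by noncomm_ring
        rw [hJ, smul_zero]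
      have e₁ : br c₁ (br c₂ c₃) = π (b2 (σ c₁) (b2 (σ c₂) (σ c₃))) := by
        have h := key (σ c₁) (b2 (σ c₂) (σ c₃)) _ (hb2 _ _)
        rwa [hσ, ← hbrd c₂ c₃] at h
      have e₂ : br c₂ (br c₃ c₁) = π (b2 (σ c₂) (b2 (σ c₃) (σ c₁))) := by
        have h := key (σ c₂) (b2 (σ c₃) (σ c₁)) _ (hb2 _ _)
        rwa [hσ, ← hbrd c₃ c₁] at h
      have e₃ : br c₃ (br c₁ c₂) = π (b2 (σ c₃) (b2 (σ c₁) (σ c₂))) := by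
        have h := key (σ c₃) (b2 (σ c₁) (σ c₂)) _ (hb2 _ _)
        rwa [hσ, ← hbrd c₁ c₂] at h
      rw [e₁, e₂, e₃, ← map_add, ← map_add, hsum, map_zero]
    · -- Leibniz (right)
      intro c₁ c₂ c₃
      have h1 := key (σ c₁) (σ c₂ * σ c₃)
          (b2 (σ c₁) (σ c₂) * σ c₃ + σ c₂ * b2 (σ c₁) (σ c₃)) (by
        rw [smul_add, ← smul_mul_assoc (X : PowerSeries K) (b2 (σ c₁) (σ c₂)) (σ c₃),
          ← mul_smul_comm (X : PowerSeries K) (σ c₂) (b2 (σ c₁) (σ c₃)), hb2, hb2,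
          smul_mul_assoc, mul_smul_comm, ← smul_add]
        congr 1
        noncomm_ring)
      rw [hσ, map_mul, hσ, hσ] at h1
      rw [h1, map_add, map_mul, map_mul, hσ c₃, hσ c₂, hbrd c₁ c₂, hbrd c₁ c₃]
    · -- Leibniz (left)
      intro c₁ c₂ c₃
      have h1 := key (σ c₁ * σ c₂) (σ c₃)
          (b2 (σ c₁) (σ c₃) * σ c₂ + σ c₁ * b2 (σ c₂) (σ c₃)) (by
        rw [smul_add, ← smul_mul_assoc (X : PowerSeries K) (b2 (σ c₁) (σ c₃)) (σ c₂),
          ← mul_smul_comm (X : PowerSeries K) (σ c₁) (b2 (σ c₂) (σ c₃)), hb2, hb2,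
          smul_mul_assoc, mul_smul_comm, ← smul_add]
        congr 1
        noncomm_ring)
      rw [hσ, map_mul, hσ, hσ] at h1
      rw [h1, map_add, map_mul, map_mul, hσ c₂, hσ c₁, hbrd c₁ c₃, hbrd c₂ c₃]
end

section
/- Let K be a field of characteristic 0, (R, 𝔪) a parameter K-algebra, and C a smooth integral commutative K-algebra. Let (A, {−,−}, π) be a Poisson R-deformation of C. Then there is an R-algebra isomorphism φ from the 𝔪-adic completion lim_i ((R/𝔪^{i+1}) ⊗_K C) of R ⊗_K C onto A such that π ∘ φ equals the canonical augmentation of the completion (the map induced by r ⊗ c ↦ (r mod 𝔪)·c). -/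
open IsLocalRing TensorProduct

variable (K : Type) [Field K]
variable (R : Type) [CommRing R] [Algebra K R] [IsLocalRing R]
variable (C : Type) [CommRing C] [Algebra K C]

/-- The level-`i` piece `(R/𝔪^{i+1}) ⊗_K C` of the `𝔪`-adic completion of `R ⊗_K C`. -/
abbrev TensorLevel (i : ℕ) : Type := (R ⧸ (maximalIdeal R ^ (i + 1))) ⊗[K] C

/-- The transition homomorphism `(R/𝔪^{i+2}) ⊗_K C → (R/𝔪^{i+1}) ⊗_K C`. -/
noncomputable def tensorTransition (i : ℕ) :
    TensorLevel K R C (i + 1) →ₐ[K] TensorLevel K R C i :=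
  Algebra.TensorProduct.map
    (Ideal.Quotient.liftₐ (maximalIdeal R ^ (i + 1 + 1))
      (Ideal.Quotient.mkₐ K (maximalIdeal R ^ (i + 1)))
      (fun a ha => by
        rw [Ideal.Quotient.mkₐ_eq_mk, Ideal.Quotient.eq_zero_iff_mem]
        exact Ideal.pow_le_pow_right (Nat.le_succ _) ha))
    (AlgHom.id K C)

@[simp] lemma tensorTransition_tmul (i : ℕ) (r : R) (c : C) :
    tensorTransition K R C i
        ((Ideal.Quotient.mk (maximalIdeal R ^ (i + 1 + 1)) r) ⊗ₜ[K] c)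
      = (Ideal.Quotient.mk (maximalIdeal R ^ (i + 1)) r) ⊗ₜ[K] c := by
  simp [tensorTransition]
  first | rfl | simp [Ideal.Quotient.lift_mk]

/-- The `𝔪`-adic completion `lim_i (R/𝔪^{i+1}) ⊗_K C` of `R ⊗_K C`, realized as the
`K`-subalgebra of compatible sequences in the product of the `(R/𝔪^{i+1}) ⊗_K C`. -/
noncomputable def tensorLimit : Subalgebra K (∀ i, TensorLevel K R C i) where
  carrier := {f | ∀ i, tensorTransition K R C i (f (i + 1)) = f i}
  mul_mem' := by
    intro a b ha hb i
    simp only [Pi.mul_apply, map_mul]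
    rw [ha i, hb i]
  add_mem' := by
    intro a b ha hb i
    simp only [Pi.add_apply, map_add]
    rw [ha i, hb i]
  one_mem' := by
    intro i
    simp only [Pi.one_apply, map_one]
  zero_mem' := by
    intro i
    simp only [Pi.zero_apply, map_zero]
  algebraMap_mem' := by
    intro k i
    simp only [Pi.algebraMap_apply, AlgHom.commutes]

/-- The structural ring homomorphism `R → lim_i (R/𝔪^{i+1}) ⊗_K C`,
`r ↦ (r mod 𝔪^{i+1}) ⊗ 1`. -/
noncomputable def tensorLimitStruct : R →+* ↥(tensorLimit K R C) where
  toFun r := ⟨fun i => (Ideal.Quotient.mk (maximalIdeal R ^ (i + 1)) r) ⊗ₜ[K] (1 : C),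
    fun i => tensorTransition_tmul K R C i r 1⟩
  map_one' := by
    apply Subtype.ext
    funext i
    simp [Algebra.TensorProduct.one_def]
  map_mul' r r' := by
    apply Subtype.ext
    funext i
    simp [Algebra.TensorProduct.tmul_mul_tmul]
  map_zero' := by
    apply Subtype.ext
    funext i
    simp
  map_add' r r' := by
    apply Subtype.ext
    funext i
    simp [TensorProduct.add_tmul]

/-- The residue homomorphism `R → K → C` (using `R/𝔪 = K`), as a `K`-algebra homomorphism. -/
noncomputable def resHom
    (hres : Function.Bijective (algebraMap K (R ⧸ maximalIdeal R))) : R →ₐ[K] C where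
  toRingHom := (algebraMap K C).comp
    (((RingEquiv.ofBijective (algebraMap K (R ⧸ maximalIdeal R)) hres).symm :
        (R ⧸ maximalIdeal R) →+* K).comp
      (Ideal.Quotient.mk (maximalIdeal R)))
  commutes' := fun k => by
    show (algebraMap K C) ((RingEquiv.ofBijective (algebraMap K (R ⧸ maximalIdeal R)) hres).symm
        ((Ideal.Quotient.mk (maximalIdeal R)) (algebraMap K R k))) = algebraMap K C k
    have h1 : (Ideal.Quotient.mk (maximalIdeal R)) (algebraMap K R k)
        = algebraMap K (R ⧸ maximalIdeal R) k := by
      rw [← Ideal.Quotient.algebraMap_eq, ← IsScalarTower.algebraMap_apply]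
    rw [h1]
    have h2 : (RingEquiv.ofBijective (algebraMap K (R ⧸ maximalIdeal R)) hres).symm
        (algebraMap K (R ⧸ maximalIdeal R) k) = k :=
      (RingEquiv.ofBijective (algebraMap K (R ⧸ maximalIdeal R)) hres).symm_apply_apply k
    rw [h2]

/-- The canonical augmentation `(R/𝔪^{0+1}) ⊗_K C → C` induced by `r ⊗ c ↦ (r mod 𝔪)·c`,
using the identification `R/𝔪 = K`. -/
noncomputable def tensorAug
    (hres : Function.Bijective (algebraMap K (R ⧸ maximalIdeal R))) :
    TensorLevel K R C 0 →ₐ[K] C :=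
  Algebra.TensorProduct.productMap
    (Ideal.Quotient.liftₐ (maximalIdeal R ^ (0 + 1)) (resHom K R C hres)
      (fun a ha => by
        have haa : a ∈ maximalIdeal R := by rwa [pow_one] at ha
        show (algebraMap K C) ((RingEquiv.ofBijective (algebraMap K (R ⧸ maximalIdeal R))
            hres).symm ((Ideal.Quotient.mk (maximalIdeal R)) a)) = 0
        rw [Ideal.Quotient.eq_zero_iff_mem.mpr haa]
        simp))
    (AlgHom.id K C)


/-!
Since `C` is formally smooth, the isomorphism `C ≅ A/𝔪A` induced by `π` lifts step by step along
the square-zero extensions `A/𝔪^{i+2}A → A/𝔪^{i+1}A` to compatible sections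
`σᵢ : C → A/𝔪^{i+1}A`. Together with `R → A` they give comparison maps
`(R/𝔪^{i+1}) ⊗_K C → A/𝔪^{i+1}A`, `r ⊗ c ↦ r σᵢ(c)`. These are surjective by Nakayama's lemma
for the nilpotent ideal `𝔪/𝔪^{i+1}`, and injective by induction on `i`: an element of the kernel
`(𝔪^{i+1}/𝔪^{i+2}) ⊗_K C` of the left-hand transition map that dies in `A/𝔪^{i+2}A` lifts to
`𝔪^{i+1} ⊗_R A`, and since `A` is flat the multiplication map `𝔪^{i+1} ⊗_R A → A` is injective,
so it comes from `𝔪^{i+2} ⊗_R A` and was zero. Passing to the inverse limit and using that `A` is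
`𝔪`-adically complete gives `φ`.
-/

section InverseLimit

variable {k : Type*} [CommSemiring k] {B B' : ℕ → Type*} [∀ i, Semiring (B i)]
  [∀ i, Algebra k (B i)] [∀ i, Semiring (B' i)] [∀ i, Algebra k (B' i)]

def inverseLimit (t : ∀ i, B (i + 1) →ₐ[k] B i) : Subalgebra k (∀ i, B i) where
  carrier := {f | ∀ i, t i (f (i + 1)) = f i}
  mul_mem' ha hb i := by simp only [Pi.mul_apply, map_mul, ha i, hb i]
  add_mem' ha hb i := by simp only [Pi.add_apply, map_add, ha i, hb i]
  algebraMap_mem' c i := by simp only [Pi.algebraMap_apply, AlgHom.commutes]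

namespace inverseLimit

variable {t : ∀ i, B (i + 1) →ₐ[k] B i} {t' : ∀ i, B' (i + 1) →ₐ[k] B' i}

lemma transition_apply (f : inverseLimit t) (i : ℕ) :
    t i ((f : ∀ i, B i) (i + 1)) = (f : ∀ i, B i) i :=
  f.2 i

def lift {D : Type*} [Semiring D] [Algebra k D] (g : ∀ i, D →ₐ[k] B i)
    (hg : ∀ i, (t i).comp (g (i + 1)) = g i) : D →ₐ[k] inverseLimit t :=
  (AlgHom.pi g).codRestrict _ fun d i => AlgHom.congr_fun (hg i) d

variable (t t') in
def map (f : ∀ i, B i →ₐ[k] B' i) (hf : ∀ i, (t' i).comp (f (i + 1)) = (f i).comp (t i)) :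
    inverseLimit t →ₐ[k] inverseLimit t' :=
  lift (fun i => (f i).comp ((Pi.evalAlgHom k B i).comp (inverseLimit t).val)) fun i => by
    ext x
    simp [← AlgHom.comp_apply, hf, transition_apply]

lemma map_bijective (f : ∀ i, B i →ₐ[k] B' i)
    (hf : ∀ i, (t' i).comp (f (i + 1)) = (f i).comp (t i)) (hbij : ∀ i, Function.Bijective (f i)) :
    Function.Bijective (map t t' f hf) := by
  refine ⟨fun x y hxy => Subtype.ext <| funext fun i => (hbij i).1 ?_, fun y => ?_⟩
  · exact congr_arg (fun z : inverseLimit t' => (z : ∀ i, B' i) i) hxy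
  · choose x hx using fun i => (hbij i).2 ((y : ∀ i, B' i) i)
    refine ⟨⟨x, fun i => (hbij i).1 ?_⟩, Subtype.ext <| funext hx⟩
    rw [← AlgHom.comp_apply, ← hf, AlgHom.comp_apply, hx, hx, transition_apply]

end inverseLimit

end InverseLimit

section LiftTower

variable {k D : Type*} [CommRing k] [CommRing D] [Algebra k D] [Algebra.FormallySmooth k D]
  {B : ℕ → Type*} [∀ i, CommRing (B i)] [∀ i, Algebra k (B i)] (t : ∀ i, B (i + 1) →ₐ[k] B i)
  (ht : ∀ i, Function.Surjective (t i)) (hnil : ∀ i, IsNilpotent (RingHom.ker (t i)))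

noncomputable def liftTower (σ₀ : D →ₐ[k] B 0) : ∀ i, D →ₐ[k] B i
  | 0 => σ₀
  | i + 1 => Algebra.FormallySmooth.liftOfSurjective (liftTower σ₀ i) (t i) (ht i) (hnil i)

lemma comp_liftTower_succ (σ₀ : D →ₐ[k] B 0) (i : ℕ) :
    (t i).comp (liftTower t ht hnil σ₀ (i + 1)) = liftTower t ht hnil σ₀ i :=
  Algebra.FormallySmooth.comp_liftOfSurjective _ _ _ _

end LiftTower

lemma Module.Flat.exists_rTensor_inclusion_eq {S M : Type*} [CommRing S] [AddCommGroup M]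
    [Module S M] [Module.Flat S M] {J J' : Ideal S} (h : J' ≤ J) (w : J ⊗[S] M)
    (hw : TensorProduct.lift ((LinearMap.lsmul S M).comp J.subtype) w ∈ J' • (⊤ : Submodule S M)) :
    ∃ u : J' ⊗[S] M, LinearMap.rTensor M (Submodule.inclusion h) u = w := by
  have hinj : Function.Injective (TensorProduct.lift ((LinearMap.lsmul S M).comp J.subtype)) := by
    rw [← LinearMap.lid_comp_rTensor, LinearMap.coe_comp]
    exact (TensorProduct.lid S M).injective.comp
      (Module.Flat.rTensor_preserves_injective_linearMap J.subtype J.injective_subtype)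
  suffices ∀ z ∈ J' • (⊤ : Submodule S M), ∃ u : J' ⊗[S] M,
      TensorProduct.lift ((LinearMap.lsmul S M).comp J.subtype)
        (LinearMap.rTensor M (Submodule.inclusion h) u) = z by
    obtain ⟨u, hu⟩ := this _ hw
    exact ⟨u, hinj hu⟩
  intro z hz
  refine Submodule.smul_induction_on hz (fun r hr a _ => ⟨⟨r, hr⟩ ⊗ₜ a, by simp⟩) ?_
  rintro _ _ ⟨u, rfl⟩ ⟨v, rfl⟩
  exact ⟨u + v, by rw [map_add, map_add]⟩

theorem Submodule.sup_pow_smul_top_eq_top {S M : Type*} [CommRing S] [AddCommGroup M] [Module S M]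
    {I : Ideal S} {N : Submodule S M} (h : N ⊔ I • ⊤ = ⊤) (n : ℕ) : N ⊔ I ^ n • ⊤ = ⊤ := by
  induction n with
  | zero => rw [pow_zero, Ideal.one_eq_top, Submodule.top_smul, sup_top_eq]
  | succ n ih =>
    refine top_le_iff.mp ?_
    calc ⊤ = N ⊔ I ^ n • (N ⊔ I • ⊤) := by rw [h, ih]
      _ = N ⊔ (I ^ n • N ⊔ I ^ (n + 1) • ⊤) := by
        rw [Submodule.smul_sup, pow_succ, Submodule.mul_smul]
      _ ≤ N ⊔ I ^ (n + 1) • ⊤ := sup_le le_sup_left (sup_le_sup_right Submodule.smul_le_right _)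

section AdicQuotient

variable (k : Type*) {S : Type*} (A : Type*) [CommRing k] [CommRing S] [CommRing A] [Algebra k A]
  [Algebra S A] (I : Ideal S)

def adicIdeal (i : ℕ) : Ideal A := (I ^ (i + 1)).map (algebraMap S A)

abbrev AdicLevel (i : ℕ) : Type _ := A ⧸ adicIdeal A I i

variable {A} in
lemma mem_adicIdeal_iff {i : ℕ} {a : A} :
    a ∈ adicIdeal A I i ↔ a ∈ (I ^ (i + 1) • ⊤ : Submodule S A) := by
  rw [Ideal.smul_top_eq_map]
  rfl

lemma adicIdeal_antitone : Antitone (adicIdeal A I) := fun _ _ h =>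
  Ideal.map_mono (Ideal.pow_le_pow_right (Nat.succ_le_succ h))

def adicTransition (i : ℕ) : AdicLevel A I (i + 1) →ₐ[k] AdicLevel A I i :=
  Ideal.Quotient.factorₐ k (adicIdeal_antitone A I i.le_succ)

lemma adicTransition_surjective (i : ℕ) : Function.Surjective (adicTransition k A I i) :=
  Ideal.Quotient.factor_surjective (adicIdeal_antitone A I i.le_succ)

lemma isNilpotent_ker_adicTransition (i : ℕ) :
    IsNilpotent (RingHom.ker (adicTransition k A I i)) := by
  refine ⟨2, le_bot_iff.mp ?_⟩
  change RingHom.ker (Ideal.Quotient.factor (adicIdeal_antitone A I i.le_succ)) ^ 2 ≤ ⊥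
  rw [Ideal.Quotient.factor_ker, ← Ideal.map_pow,
    ← Ideal.map_quotient_self (adicIdeal A I (i + 1))]
  refine Ideal.map_mono ?_
  rw [adicIdeal, adicIdeal, ← Ideal.map_pow, ← pow_mul]
  exact Ideal.map_mono (Ideal.pow_le_pow_right (by omega))

def toAdicLimit : A →ₐ[k] inverseLimit (adicTransition k A I) :=
  inverseLimit.lift (fun _ => Ideal.Quotient.mkₐ k _) fun _ => rfl

variable {k A I}

lemma mk_adicIdeal_eq_mk_iff {i : ℕ} {a b : A} :
    Ideal.Quotient.mk (adicIdeal A I i) a = Ideal.Quotient.mk _ b ↔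
      a ≡ b [SMOD (I ^ (i + 1) • ⊤ : Submodule S A)] := by
  rw [Ideal.Quotient.eq, SModEq.sub_mem, mem_adicIdeal_iff]

lemma IsHausdorff.injective_toAdicLimit (h : IsHausdorff I A) :
    Function.Injective (toAdicLimit k A I) := by
  intro a b hab
  refine (IsHausdorff.eq_iff_smodEq (I := I)).mpr fun n => ?_
  cases n with
  | zero => rw [pow_zero, Ideal.one_eq_top, Submodule.top_smul]; exact SModEq.top
  | succ i =>
    exact mk_adicIdeal_eq_mk_iff.mp
      (congr_arg (fun x : inverseLimit _ => (x : ∀ j, AdicLevel A I j) i) hab)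

lemma IsPrecomplete.surjective_toAdicLimit (h : IsPrecomplete I A) :
    Function.Surjective (toAdicLimit k A I) := by
  intro x
  choose ℓ hℓ using fun i => Ideal.Quotient.mk_surjective ((x : ∀ i, AdicLevel A I i) i)
  have hℓx {m n : ℕ} (hmn : m ≤ n) :
      Ideal.Quotient.mk (adicIdeal A I m) (ℓ n) = (x : ∀ i, AdicLevel A I i) m := by
    rw [Ideal.Quotient.eq_factor_of_eq_factor_succ (adicIdeal_antitone A I) _
      (fun i => (x.2 i).symm) hmn, ← hℓ n]
    rfl
  obtain ⟨L, hL⟩ := h.prec (f := ℓ) fun {m n} hmn => by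
    cases m with
    | zero => rw [pow_zero, Ideal.one_eq_top, Submodule.top_smul]; exact SModEq.top
    | succ j => exact mk_adicIdeal_eq_mk_iff.mp ((hℓx j.le_succ).trans (hℓx (by omega)).symm)
  refine ⟨L, Subtype.ext <| funext fun i => ?_⟩
  exact (mk_adicIdeal_eq_mk_iff.mpr (hL (i + 1))).symm.trans (hℓx i.le_succ)

lemma IsAdicComplete.bijective_toAdicLimit (h : IsAdicComplete I A) :
    Function.Bijective (toAdicLimit k A I) :=
  ⟨h.toIsHausdorff.injective_toAdicLimit, h.toIsPrecomplete.surjective_toAdicLimit⟩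

variable {D : Type*} [CommRing D] [Algebra k D] {π : A →ₐ[k] D}
  (hπ : RingHom.ker π = adicIdeal A I 0)

noncomputable def adicResidue (i : ℕ) : AdicLevel A I i →ₐ[k] D :=
  Ideal.Quotient.liftₐ _ π fun a ha => by
    rw [← RingHom.mem_ker, hπ]
    exact adicIdeal_antitone A _ (Nat.zero_le i) ha

@[simp] lemma adicResidue_mk (i : ℕ) (a : A) : adicResidue hπ i (Ideal.Quotient.mk _ a) = π a :=
  rfl

lemma adicResidue_comp_adicTransition (i : ℕ) :
    (adicResidue hπ i).comp (adicTransition k A I i) = adicResidue hπ (i + 1) :=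
  AlgHom.ext fun x => by
    obtain ⟨a, rfl⟩ := Ideal.Quotient.mk_surjective x
    simp [adicTransition]

lemma adicResidue_comp_eq_id {σ : ∀ i, D →ₐ[k] AdicLevel A I i}
    (hσ : ∀ i, (adicTransition k A I i).comp (σ (i + 1)) = σ i)
    (hσ₀ : (adicResidue hπ 0).comp (σ 0) = AlgHom.id k D) (i : ℕ) :
    (adicResidue hπ i).comp (σ i) = AlgHom.id k D := by
  induction i with
  | zero => exact hσ₀
  | succ i ih => rw [← adicResidue_comp_adicTransition, AlgHom.comp_assoc, hσ, ih]

lemma adicResidue_zero_bijective (hsurj : Function.Surjective π) :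
    Function.Bijective (adicResidue hπ 0) := by
  refine ⟨(injective_iff_map_eq_zero _).mpr fun x hx => ?_, fun d => ?_⟩
  · obtain ⟨a, rfl⟩ := Ideal.Quotient.mk_surjective x
    rwa [adicResidue_mk, ← RingHom.mem_ker, hπ, ← Ideal.Quotient.eq_zero_iff_mem] at hx
  · obtain ⟨a, rfl⟩ := hsurj d
    exact ⟨Ideal.Quotient.mk _ a, rfl⟩

lemma exists_compatible_sections [Algebra.FormallySmooth k D] (hsurj : Function.Surjective π) :
    ∃ σ : ∀ i, D →ₐ[k] AdicLevel A I i,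
      (∀ i, (adicTransition k A I i).comp (σ (i + 1)) = σ i) ∧
        ∀ i, (adicResidue hπ i).comp (σ i) = AlgHom.id k D := by
  let e := AlgEquiv.ofBijective _ (adicResidue_zero_bijective hπ hsurj)
  let σ := liftTower (adicTransition k A I) (adicTransition_surjective k A I)
    (isNilpotent_ker_adicTransition k A I) e.symm.toAlgHom
  have hσ : ∀ i, (adicTransition k A I i).comp (σ (i + 1)) = σ i := comp_liftTower_succ _ _ _ _
  exact ⟨σ, hσ, adicResidue_comp_eq_id hπ hσ (AlgHom.ext e.apply_symm_apply)⟩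

end AdicQuotient

section Deformation

variable {K R C} {A : Type*} [CommRing A] [Algebra K A] [Algebra R A] [IsScalarTower K R A]

noncomputable def residueScalar
    (hres : Function.Bijective (algebraMap K (R ⧸ maximalIdeal R))) : R →+* K :=
  ((RingEquiv.ofBijective _ hres).symm : R ⧸ maximalIdeal R →+* K).comp (Ideal.Quotient.mk _)

lemma sub_algebraMap_residueScalar_mem
    (hres : Function.Bijective (algebraMap K (R ⧸ maximalIdeal R))) (r : R) :
    r - algebraMap K R (residueScalar hres r) ∈ maximalIdeal R := by
  rw [← Ideal.Quotient.eq, ← Ideal.Quotient.algebraMap_eq, ← IsScalarTower.algebraMap_apply]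
  exact ((RingEquiv.ofBijective _ hres).apply_symm_apply _).symm

lemma map_algebraMap_eq_residueScalar
    (hres : Function.Bijective (algebraMap K (R ⧸ maximalIdeal R))) {π : A →ₐ[K] C}
    (hπ : RingHom.ker π = adicIdeal A (maximalIdeal R) 0) (r : R) :
    π (algebraMap R A r) = algebraMap K C (residueScalar hres r) := by
  have hmem : algebraMap R A (r - algebraMap K R (residueScalar hres r)) ∈ RingHom.ker π := by
    rw [hπ, adicIdeal, zero_add, pow_one]
    exact Ideal.mem_map_of_mem _ (sub_algebraMap_residueScalar_mem hres r)
  rwa [RingHom.mem_ker, map_sub, map_sub, ← IsScalarTower.algebraMap_apply, AlgHom.commutes,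
    sub_eq_zero] at hmem

noncomputable def levelMap (σ : ∀ i, C →ₐ[K] AdicLevel A (maximalIdeal R) i) (i : ℕ) :
    TensorLevel K R C i →ₐ[K] AdicLevel A (maximalIdeal R) i :=
  Algebra.TensorProduct.productMap
    (Ideal.quotientMapₐ _ (IsScalarTower.toAlgHom K R A) Ideal.le_comap_map) (σ i)

@[simp] lemma levelMap_tmul (σ : ∀ i, C →ₐ[K] AdicLevel A (maximalIdeal R) i) (i : ℕ) (r : R)
    (c : C) :
    levelMap σ i (Ideal.Quotient.mk _ r ⊗ₜ c) = Ideal.Quotient.mk _ (algebraMap R A r) * σ i c :=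
  rfl

lemma adicTransition_comp_levelMap (σ : ∀ i, C →ₐ[K] AdicLevel A (maximalIdeal R) i)
    {i : ℕ} (hσ : (adicTransition K A (maximalIdeal R) i).comp (σ (i + 1)) = σ i) :
    (adicTransition K A (maximalIdeal R) i).comp (levelMap σ (i + 1)) =
      (levelMap σ i).comp (tensorTransition K R C i) := by
  refine Algebra.TensorProduct.ext' fun x c => ?_
  obtain ⟨r, rfl⟩ := Ideal.Quotient.mk_surjective x
  rw [AlgHom.comp_apply, AlgHom.comp_apply, tensorTransition_tmul, levelMap_tmul, levelMap_tmul,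
    map_mul, ← hσ]
  rfl

lemma levelMap_surjective {π : A →ₐ[K] C} (hπ : RingHom.ker π = adicIdeal A (maximalIdeal R) 0)
    {σ : ∀ i, C →ₐ[K] AdicLevel A (maximalIdeal R) i} {i : ℕ}
    (hsec : (adicResidue hπ i).comp (σ i) = AlgHom.id K C) :
    Function.Surjective (levelMap σ i) := by
  let M : Submodule R A :=
    { carrier := {a | ∃ t, levelMap σ i t = Ideal.Quotient.mk _ a}
      zero_mem' := ⟨0, by simp⟩
      add_mem' := fun ⟨t, ht⟩ ⟨t', ht'⟩ => ⟨t + t', by rw [map_add, ht, ht', map_add]⟩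
      smul_mem' := fun r a ⟨t, ht⟩ => ⟨(Ideal.Quotient.mk _ r ⊗ₜ 1) * t, by
        rw [map_mul, levelMap_tmul, ht, map_one, mul_one, ← map_mul, ← Algebra.smul_def]⟩ }
  have hM : M ⊔ maximalIdeal R • ⊤ = ⊤ := by
    refine eq_top_iff.mpr fun a _ => ?_
    obtain ⟨s, hs⟩ := Ideal.Quotient.mk_surjective (σ i (π a))
    have hsM : s ∈ M := ⟨1 ⊗ₜ π a, by
      rw [← map_one (Ideal.Quotient.mk _), levelMap_tmul, map_one, map_one, one_mul, hs]⟩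
    have hdiff : a - s ∈ RingHom.ker π := by
      rw [RingHom.mem_ker, map_sub, ← adicResidue_mk hπ i s, hs, ← AlgHom.comp_apply, hsec,
        AlgHom.id_apply, sub_self]
    rw [hπ, mem_adicIdeal_iff, zero_add, pow_one] at hdiff
    exact Submodule.mem_sup.mpr ⟨s, hsM, a - s, hdiff, add_sub_cancel s a⟩
  have hpow : maximalIdeal R ^ (i + 1) • ⊤ ≤ M := fun a ha =>
    ⟨0, by rw [map_zero, eq_comm, Ideal.Quotient.eq_zero_iff_mem, mem_adicIdeal_iff]; exact ha⟩
  have hMtop : M = ⊤ := by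
    rw [← sup_eq_left.mpr hpow, Submodule.sup_pow_smul_top_eq_top hM]
  intro b
  obtain ⟨a, rfl⟩ := Ideal.Quotient.mk_surjective b
  exact (hMtop ▸ Submodule.mem_top : a ∈ M)

lemma includeRight_comp_tensorAug
    (hres : Function.Bijective (algebraMap K (R ⧸ maximalIdeal R))) :
    Algebra.TensorProduct.includeRight.comp (tensorAug K R C hres) = AlgHom.id K _ := by
  refine Algebra.TensorProduct.ext' fun x c => ?_
  obtain ⟨r, rfl⟩ := Ideal.Quotient.mk_surjective x
  have hr : Ideal.Quotient.mk (maximalIdeal R ^ (0 + 1)) r =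
      algebraMap K _ (residueScalar hres r) := by
    rw [← Ideal.Quotient.mk_algebraMap, Ideal.Quotient.eq, zero_add, pow_one]
    exact sub_algebraMap_residueScalar_mem hres r
  rw [hr, Algebra.algebraMap_eq_smul_one, ← smul_tmul', AlgHom.comp_apply, map_smul]
  simp [tensorAug]

lemma adicResidue_comp_levelMap_zero
    (hres : Function.Bijective (algebraMap K (R ⧸ maximalIdeal R))) {π : A →ₐ[K] C}
    (hπ : RingHom.ker π = adicIdeal A (maximalIdeal R) 0)
    {σ : ∀ i, C →ₐ[K] AdicLevel A (maximalIdeal R) i}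
    (hsec : (adicResidue hπ 0).comp (σ 0) = AlgHom.id K C) :
    (adicResidue hπ 0).comp (levelMap σ 0) = tensorAug K R C hres := by
  refine Algebra.TensorProduct.ext' fun x c => ?_
  obtain ⟨r, rfl⟩ := Ideal.Quotient.mk_surjective x
  rw [AlgHom.comp_apply, levelMap_tmul, map_mul, adicResidue_mk,
    map_algebraMap_eq_residueScalar hres hπ, ← AlgHom.comp_apply, hsec]
  simp [tensorAug, resHom, residueScalar]

lemma mk_mul_eq_residueScalar_smul
    (hres : Function.Bijective (algebraMap K (R ⧸ maximalIdeal R))) {n : ℕ} (r : R) {m : R}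
    (hm : m ∈ maximalIdeal R ^ n) :
    Ideal.Quotient.mk (maximalIdeal R ^ (n + 1)) (r * m) =
      residueScalar hres r • Ideal.Quotient.mk _ m := by
  rw [Algebra.smul_def, ← Ideal.Quotient.mk_algebraMap, ← map_mul, Ideal.Quotient.eq, ← sub_mul,
    pow_succ']
  exact Ideal.mul_mem_mul (sub_algebraMap_residueScalar_mem hres r) hm

lemma map_smul_eq_residueScalar_smul
    (hres : Function.Bijective (algebraMap K (R ⧸ maximalIdeal R))) {π : A →ₐ[K] C}
    (hπ : RingHom.ker π = adicIdeal A (maximalIdeal R) 0) (r : R) (a : A) :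
    π (r • a) = residueScalar hres r • π a := by
  rw [Algebra.smul_def, map_mul, map_algebraMap_eq_residueScalar hres hπ, Algebra.smul_def]

-- `R`-balanced because `R` acts on `𝔪^{i+1}/𝔪^{i+2}` and on `C` through the residue field `K`.
noncomputable def idealTensorResidue
    (hres : Function.Bijective (algebraMap K (R ⧸ maximalIdeal R))) {π : A →ₐ[K] C}
    (hπ : RingHom.ker π = adicIdeal A (maximalIdeal R) 0) (i : ℕ) :
    (maximalIdeal R ^ (i + 1) : Ideal R) ⊗[R] A →+ TensorLevel K R C (i + 1) :=
  TensorProduct.liftAddHom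
    { toFun := fun m =>
        ((TensorProduct.mk K _ C (Ideal.Quotient.mk _ (m : R))).comp π.toLinearMap).toAddMonoidHom
      map_zero' := by ext; simp
      map_add' := fun m m' => by ext; simp }
    fun r m a => by
      simp [mk_mul_eq_residueScalar_smul hres r m.2, map_smul_eq_residueScalar_smul hres hπ]

@[simp] lemma idealTensorResidue_tmul
    (hres : Function.Bijective (algebraMap K (R ⧸ maximalIdeal R))) {π : A →ₐ[K] C}
    (hπ : RingHom.ker π = adicIdeal A (maximalIdeal R) 0) (i : ℕ)
    (m : (maximalIdeal R ^ (i + 1) : Ideal R)) (a : A) :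
    idealTensorResidue hres hπ i (m ⊗ₜ a) = Ideal.Quotient.mk _ (m : R) ⊗ₜ π a :=
  rfl

variable (K R) in
noncomputable def powQuotientTransition (i : ℕ) :
    R ⧸ maximalIdeal R ^ (i + 1 + 1) →ₐ[K] R ⧸ maximalIdeal R ^ (i + 1) :=
  Ideal.Quotient.factorₐ K (Ideal.pow_le_pow_right (i + 1).le_succ)

lemma tensorTransition_toLinearMap (i : ℕ) : (tensorTransition K R C i).toLinearMap =
    LinearMap.rTensor C (powQuotientTransition K R i).toLinearMap :=
  rfl

lemma exists_idealTensor_of_mem_ker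
    (hres : Function.Bijective (algebraMap K (R ⧸ maximalIdeal R))) {π : A →ₐ[K] C}
    (hπ : RingHom.ker π = adicIdeal A (maximalIdeal R) 0)
    {σ : ∀ i, C →ₐ[K] AdicLevel A (maximalIdeal R) i} {i : ℕ}
    (hsec : (adicResidue hπ (i + 1)).comp (σ (i + 1)) = AlgHom.id K C)
    (y : LinearMap.ker (powQuotientTransition K R i).toLinearMap ⊗[K] C) :
    ∃ w, Ideal.Quotient.mk _
        (TensorProduct.lift ((LinearMap.lsmul R A).comp (maximalIdeal R ^ (i + 1)).subtype) w) =
        levelMap σ (i + 1) (LinearMap.rTensor C (Submodule.subtype _) y) ∧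
      idealTensorResidue hres hπ i w = LinearMap.rTensor C (Submodule.subtype _) y := by
  induction y using TensorProduct.induction_on with
  | zero => exact ⟨0, by simp, by simp⟩
  | tmul x c =>
    obtain ⟨x, hx⟩ := x
    obtain ⟨r, rfl⟩ := Ideal.Quotient.mk_surjective x
    have hr : r ∈ maximalIdeal R ^ (i + 1) := by
      rwa [LinearMap.mem_ker, AlgHom.toLinearMap_apply, powQuotientTransition,
        Ideal.Quotient.factorₐ_apply_mk, Ideal.Quotient.eq_zero_iff_mem] at hx
    obtain ⟨a, ha⟩ := Ideal.Quotient.mk_surjective (σ (i + 1) c)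
    refine ⟨⟨r, hr⟩ ⊗ₜ a, ?_, ?_⟩
    · simp [Algebra.smul_def, ha]
    · rw [idealTensorResidue_tmul, ← adicResidue_mk hπ (i + 1), ha, ← AlgHom.comp_apply, hsec]
      rfl
  | add y y' hy hy' =>
    obtain ⟨w, hw⟩ := hy
    obtain ⟨w', hw'⟩ := hy'
    exact ⟨w + w', by simp [hw.1, hw'.1], by simp [hw.2, hw'.2]⟩

lemma idealTensorResidue_rTensor_inclusion
    (hres : Function.Bijective (algebraMap K (R ⧸ maximalIdeal R))) {π : A →ₐ[K] C}
    (hπ : RingHom.ker π = adicIdeal A (maximalIdeal R) 0) (i : ℕ)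
    (u : (maximalIdeal R ^ (i + 1 + 1) : Ideal R) ⊗[R] A) :
    idealTensorResidue hres hπ i
      (LinearMap.rTensor A (Submodule.inclusion (Ideal.pow_le_pow_right (i + 1).le_succ)) u) =
      0 := by
  induction u using TensorProduct.induction_on with
  | zero => simp
  | tmul m a => simp [Ideal.Quotient.eq_zero_iff_mem.mpr m.2]
  | add u u' hu hu' => rw [map_add, map_add, hu, hu', add_zero]

lemma levelMap_succ_injective [Module.Flat R A]
    (hres : Function.Bijective (algebraMap K (R ⧸ maximalIdeal R))) {π : A →ₐ[K] C}
    (hπ : RingHom.ker π = adicIdeal A (maximalIdeal R) 0)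
    {σ : ∀ i, C →ₐ[K] AdicLevel A (maximalIdeal R) i} {i : ℕ}
    (hσ : (adicTransition K A (maximalIdeal R) i).comp (σ (i + 1)) = σ i)
    (hsec : (adicResidue hπ (i + 1)).comp (σ (i + 1)) = AlgHom.id K C)
    (hinj : Function.Injective (levelMap σ i)) : Function.Injective (levelMap σ (i + 1)) := by
  refine (injective_iff_map_eq_zero _).mpr fun x hx => ?_
  have hT : tensorTransition K R C i x = 0 := hinj <| by
    rw [← AlgHom.comp_apply, ← adicTransition_comp_levelMap σ hσ, AlgHom.comp_apply, hx, map_zero,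
      map_zero]
  have hexact := rTensor_exact C
    (LinearMap.exact_subtype_ker_map (powQuotientTransition K R i).toLinearMap)
    (Ideal.Quotient.factor_surjective (Ideal.pow_le_pow_right (i + 1).le_succ))
  obtain ⟨y, rfl⟩ := (hexact x).mp (by rwa [← tensorTransition_toLinearMap])
  obtain ⟨w, hθ, hρ⟩ := exists_idealTensor_of_mem_ker hres hπ hsec y
  rw [hx, Ideal.Quotient.eq_zero_iff_mem, mem_adicIdeal_iff] at hθ
  obtain ⟨u, rfl⟩ :=
    Module.Flat.exists_rTensor_inclusion_eq (Ideal.pow_le_pow_right (i + 1).le_succ) w hθ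
  rw [← hρ, idealTensorResidue_rTensor_inclusion]

lemma levelMap_bijective [Module.Flat R A]
    (hres : Function.Bijective (algebraMap K (R ⧸ maximalIdeal R))) {π : A →ₐ[K] C}
    (hπ : RingHom.ker π = adicIdeal A (maximalIdeal R) 0)
    {σ : ∀ i, C →ₐ[K] AdicLevel A (maximalIdeal R) i}
    (hσ : ∀ i, (adicTransition K A (maximalIdeal R) i).comp (σ (i + 1)) = σ i)
    (hsec : ∀ i, (adicResidue hπ i).comp (σ i) = AlgHom.id K C) (i : ℕ) :
    Function.Bijective (levelMap σ i) := by
  refine ⟨?_, levelMap_surjective hπ (hsec i)⟩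
  induction i with
  | zero =>
    refine Function.LeftInverse.injective
      (g := Algebra.TensorProduct.includeRight ∘ adicResidue hπ 0) fun x => ?_
    rw [Function.comp_apply, ← AlgHom.comp_apply (adicResidue hπ 0),
      adicResidue_comp_levelMap_zero hres hπ (hsec 0), ← AlgHom.comp_apply,
      includeRight_comp_tensorAug, AlgHom.id_apply]
  | succ i ih => exact levelMap_succ_injective hres hπ (hσ i) (hsec (i + 1)) ih

end Deformation

theorem statement13_general
    (K : Type) [Field K]
    (R : Type) [CommRing R] [Algebra K R] [IsLocalRing R]
    (hres : Function.Bijective (algebraMap K (R ⧸ maximalIdeal R)))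
    (C : Type) [CommRing C] [Algebra K C]
    [Algebra.FormallySmooth K C]
    -- a Poisson `R`-deformation `(A, {-,-}, π)` of `C`:
    (A : Type) [CommRing A] [Algebra K A] [Algebra R A] [IsScalarTower K R A]
    (hflat : Module.Flat R A) (hcomp : IsAdicComplete (maximalIdeal R) A)
    (π : A →ₐ[K] C)
    (hsurj : Function.Surjective π)
    (hker : ∀ a : A, π a = 0 ↔ a ∈ (maximalIdeal R • ⊤ : Submodule R A)) :
    ∃ φ : ↥(tensorLimit K R C) →+* A,
      Function.Bijective φ ∧
      (∀ r : R, φ (tensorLimitStruct K R C r) = algebraMap R A r) ∧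
      (∀ f : ↥(tensorLimit K R C),
        π (φ f) = tensorAug K R C hres ((f : ∀ i, TensorLevel K R C i) 0)) := by
  have hπ : RingHom.ker π = adicIdeal A (maximalIdeal R) 0 := by
    ext a
    rw [RingHom.mem_ker, hker, mem_adicIdeal_iff, zero_add, pow_one]
  obtain ⟨σ, hσ, hsec⟩ := exists_compatible_sections hπ hsurj
  -- `tensorLimit K R C` is by definition `inverseLimit (tensorTransition K R C)`.
  let Φ := AlgEquiv.ofBijective _ <| inverseLimit.map_bijective (t := tensorTransition K R C)
    (levelMap σ) (fun i => adicTransition_comp_levelMap σ (hσ i))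
    (levelMap_bijective (A := A) hres hπ hσ hsec)
  let Ψ := AlgEquiv.ofBijective _ (hcomp.bijective_toAdicLimit (k := K))
  let φ := Φ.trans Ψ.symm
  have hφ (f : tensorLimit K R C) (i : ℕ) :
      Ideal.Quotient.mk _ (φ f) = levelMap σ i ((f : ∀ j, TensorLevel K R C j) i) :=
    congr_arg (fun x : inverseLimit _ => (x : ∀ j, AdicLevel A (maximalIdeal R) j) i)
      (Ψ.apply_symm_apply (Φ f))
  refine ⟨φ.toRingHom, φ.bijective, fun r => ?_, fun f => ?_⟩
  · refine Ψ.symm_apply_eq.mpr (Subtype.ext <| funext fun i => ?_)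
    change levelMap σ i (Ideal.Quotient.mk _ r ⊗ₜ 1) = Ideal.Quotient.mk _ (algebraMap R A r)
    rw [levelMap_tmul, map_one, mul_one]
  · exact (congr_arg (adicResidue hπ 0) (hφ f 0)).trans
      (AlgHom.congr_fun (adicResidue_comp_levelMap_zero hres hπ (hsec 0)) _)

/-- Let `K` be a field of characteristic `0`, `(R, 𝔪)` a parameter `K`-algebra
and `C` a smooth integral commutative `K`-algebra.  Let `(A, {-,-}, π)` be a Poisson
`R`-deformation of `C`.  Then there is an `R`-algebra isomorphism `φ` from the `𝔪`-adic
completion `lim_i (R/𝔪^{i+1}) ⊗_K C` of `R ⊗_K C` onto `A` such that `π ∘ φ` is the canonical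
augmentation of the completion. -/
theorem statement13
    (K : Type) [Field K] [CharZero K]
    (R : Type) [CommRing R] [Algebra K R] [IsNoetherianRing R] [IsLocalRing R]
    (hRcomp : IsAdicComplete (maximalIdeal R) R)
    (hres : Function.Bijective (algebraMap K (R ⧸ maximalIdeal R)))
    (C : Type) [CommRing C] [Algebra K C] [IsDomain C]
    [Algebra.FormallySmooth K C] (hfp : Algebra.FinitePresentation K C)
    -- a Poisson `R`-deformation `(A, {-,-}, π)` of `C`:
    (A : Type) [CommRing A] [Algebra K A] [Algebra R A] [IsScalarTower K R A]
    (hflat : Module.Flat R A) (hcomp : IsAdicComplete (maximalIdeal R) A)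
    (P : A → A → A)
    (haddl : ∀ a b c : A, P (a + b) c = P a c + P b c)
    (haddr : ∀ a b c : A, P a (b + c) = P a b + P a c)
    (hsmull : ∀ (r : R) (a b : A), P (r • a) b = r • P a b)
    (hsmulr : ∀ (r : R) (a b : A), P a (r • b) = r • P a b)
    (hanti : ∀ a b : A, P a b = - P b a)
    (hjac : ∀ a b c : A, P a (P b c) + P b (P c a) + P c (P a b) = 0)
    (hleibl : ∀ a b c : A, P (a * b) c = P a c * b + a * P b c)
    (hleibr : ∀ a b c : A, P a (b * c) = P a b * c + b * P a c)
    (π : A →ₐ[K] C)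
    (hsurj : Function.Surjective π)
    (hker : ∀ a : A, π a = 0 ↔ a ∈ (maximalIdeal R • ⊤ : Submodule R A))
    (hP0 : ∀ a b : A, π (P a b) = 0) :
    ∃ φ : ↥(tensorLimit K R C) →+* A,
      Function.Bijective φ ∧
      (∀ r : R, φ (tensorLimitStruct K R C r) = algebraMap R A r) ∧
      (∀ f : ↥(tensorLimit K R C),
        π (φ f) = tensorAug K R C hres ((f : ∀ i, TensorLevel K R C i) 0)) :=
  statement13_general K R hres C A hflat hcomp π hsurj hker
end
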